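/- arXiv:1604.04005 — 4 statements merged into one kernel-verified Lean document; each statement's English description precedes it below -/
import Mathlib

section
/- Let X be a Tychonoff space and let V(X) be the free topological vector space over X. Then the image i(X) of X under the canonical embedding i : X → V(X) is a closed subspace of V(X). -/
open Topology Set

universe u v w

/-- `IsFreeTVS V i` says that the (real) topological vector space `V` together with the
continuous map `i : X → V` is the free topological vector space over `X`: every continuous
map from `X` to a topological vector space `E` extends uniquely to a continuous linear
operator `V →L[ℝ] E`. -/
def IsFreeTVS {X : Type u} [TopologicalSpace X] (V : Type v) [AddCommGroup V] [Module ℝ V]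
    [TopologicalSpace V] [IsTopologicalAddGroup V] [ContinuousSMul ℝ V] (i : X → V) : Prop :=
  Continuous i ∧
    ∀ (E : Type w) [AddCommGroup E] [Module ℝ E] [TopologicalSpace E]
      [IsTopologicalAddGroup E] [ContinuousSMul ℝ E] (f : X → E),
      Continuous f → ∃! g : V →L[ℝ] E, ∀ x, g (i x) = f x

/-- `SPn i n` is the set `SP_n(X) = {λ₁x₁ + ⋯ + λₙxₙ : λᵢ ∈ [−n,n], xᵢ ∈ X}` inside `V`. -/
def SPn {X : Type u} {V : Type v} [AddCommGroup V] [Module ℝ V]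
    (i : X → V) (n : ℕ) : Set V :=
  {v | ∃ (c : Fin n → ℝ) (x : Fin n → X),
    (∀ j, c j ∈ Set.Icc (-(n : ℝ)) (n : ℝ)) ∧ v = ∑ j, c j • i (x j)}

/-!
Since extensions into `ℝ` with the indiscrete topology are unique, `range i` spans `V`, so every
`v` is a finite combination `∑ c x • i x`. Extending continuous `f : X → ℝ` to functionals on `V`
and passing to the closure shows that for `v ∈ closure (range i)` the map `f ↦ ∑ c x * f x` is
multiplicative and unital on continuous functions. Bump functions separating the finitely many
points of the support of `c` then force `c = single x 1`, i.e. `v = i x`.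
-/

open Finsupp

def WithIndiscrete (α : Type*) : Type _ := α

namespace WithIndiscrete

variable {α : Type*}

instance : TopologicalSpace (WithIndiscrete α) := ⊤

instance : IndiscreteTopology (WithIndiscrete α) := ⟨rfl⟩

instance [AddCommGroup α] : AddCommGroup (WithIndiscrete α) := ‹AddCommGroup α›

instance {R : Type*} [Semiring R] [AddCommGroup α] [Module R α] : Module R (WithIndiscrete α) :=
  ‹Module R α›

instance {R : Type*} [Semiring R] [TopologicalSpace R] [AddCommGroup α] [Module R α] :
    ContinuousSMul R (WithIndiscrete α) :=
  ⟨continuous_of_indiscreteTopology⟩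

end WithIndiscrete

theorem exists_continuous_eq_one_eqOn_zero {X : Type*} [TopologicalSpace X]
    [CompletelyRegularSpace X] {x : X} {s : Set X} (hs : IsClosed s) (hx : x ∉ s) :
    ∃ f : X → ℝ, Continuous f ∧ f x = 1 ∧ EqOn f 0 s := by
  obtain ⟨f, hf, hfx, hfs⟩ := CompletelyRegularSpace.completely_regular x s hs hx
  refine ⟨fun y => 1 - f y, by fun_prop, by simp [hfx], fun y hy => ?_⟩
  simp [hfs hy]

theorem Finsupp.linearCombination_eq_apply_of_eqOn {X : Type*} {c : X →₀ ℝ} {x : X}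
    {f : X → ℝ} (hfx : f x = 1) (hf : EqOn f 0 (↑c.support \ {x})) :
    linearCombination ℝ f c = c x := by
  rw [linearCombination_apply, Finsupp.sum, Finset.sum_eq_single x]
  · simp [hfx]
  · intro y hy hyx
    simp [hf ⟨hy, hyx⟩]
  · intro hx
    simp [notMem_support_iff.1 hx]

theorem Finsupp.exists_eq_single_one_of_linearCombination_mul {X : Type*} [TopologicalSpace X]
    [T35Space X] (c : X →₀ ℝ)
    (hmul : ∀ f g : X → ℝ, Continuous f → Continuous g →
      linearCombination ℝ (f * g) c = linearCombination ℝ f c * linearCombination ℝ g c)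
    (hone : linearCombination ℝ (1 : X → ℝ) c = 1) :
    ∃ x, c = single x 1 := by
  have bump : ∀ x, ∃ f : X → ℝ, Continuous f ∧ f x = 1 ∧ EqOn f 0 (↑c.support \ {x}) :=
    fun x => exists_continuous_eq_one_eqOn_zero (Finset.finite_toSet _).sdiff.isClosed (by simp)
  have hcard : c.support.card ≤ 1 := by
    refine Finset.card_le_one.2 fun x hx y hy => by_contra fun hxy => ?_
    obtain ⟨f, hf, hfx, hf0⟩ := bump x
    obtain ⟨g, hg, hgy, hg0⟩ := bump y
    have hfg : EqOn (f * g) 0 c.support := fun z hz => by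
      by_cases hzx : z = x
      · subst hzx; simp [hg0 ⟨hz, hxy⟩]
      · simp [hf0 ⟨hz, hzx⟩]
    have : c x * c y = 0 := by
      rw [← linearCombination_eq_apply_of_eqOn hfx hf0,
        ← linearCombination_eq_apply_of_eqOn hgy hg0, ← hmul f g hf hg, linearCombination_apply]
      exact Finset.sum_eq_zero fun z hz => by simp [hfg hz]
    exact mul_ne_zero (mem_support_iff.1 hx) (mem_support_iff.1 hy) this
  obtain ⟨x₀, -⟩ : c.support.Nonempty := support_nonempty_iff.2 (by rintro rfl; simp at hone)
  have : Nonempty X := ⟨x₀⟩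
  obtain ⟨x, a, rfl⟩ := card_support_le_one'.1 hcard
  simp only [linearCombination_single, Pi.one_apply, smul_eq_mul, mul_one] at hone
  exact ⟨x, by rw [hone]⟩

theorem ContinuousLinearMap.apply_linearCombination_of_comp_eq {R α M M' : Type*} [Semiring R]
    [AddCommMonoid M] [Module R M] [TopologicalSpace M] [AddCommMonoid M'] [Module R M']
    [TopologicalSpace M'] {φ : M →L[R] M'} {v : α → M} {f : α → M'} (hφ : ⇑φ ∘ v = f)
    (c : α →₀ R) : φ (linearCombination R v c) = linearCombination R f c := by
  rw [← hφ]
  exact apply_linearCombination R φ.toLinearMap v c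

namespace IsFreeTVS

variable {X : Type u} [TopologicalSpace X] {V : Type v} [AddCommGroup V] [Module ℝ V]
  [TopologicalSpace V] [IsTopologicalAddGroup V] [ContinuousSMul ℝ V] {i : X → V}

theorem span_range_eq_top (hV : IsFreeTVS.{u, v, w} V i) :
    Submodule.span ℝ (range i) = ⊤ := by
  by_contra hne
  obtain ⟨φ, hφ, hle⟩ := (Submodule.span ℝ (range i)).exists_le_ker_of_lt_top
    (lt_top_iff_ne_top.2 hne)
  let ψ : V →L[ℝ] WithIndiscrete (ULift.{w} ℝ) :=
    ⟨(ULift.moduleEquiv.symm : ℝ ≃ₗ[ℝ] ULift.{w} ℝ).toLinearMap ∘ₗ φ,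
      continuous_of_indiscreteTopology⟩
  have hψ : ψ = 0 := (hV.2 _ 0 continuous_const).unique
    (fun x => congrArg ULift.up (hle (Submodule.subset_span ⟨x, rfl⟩))) fun _ => rfl
  exact hφ (LinearMap.ext fun v => congrArg ULift.down (DFunLike.congr_fun hψ v))

theorem exists_comp_eq (hV : IsFreeTVS.{u, v, w} V i) {f : X → ℝ} (hf : Continuous f) :
    ∃ φ : V →L[ℝ] ℝ, ⇑φ ∘ i = f := by
  obtain ⟨g, hg, -⟩ := hV.2 (ULift.{w} ℝ) (ULift.up ∘ f) (by fun_prop)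
  exact ⟨ContinuousLinearEquiv.ulift.toContinuousLinearMap ∘L g,
    funext fun x => congrArg ULift.down (hg x)⟩

variable (hV : IsFreeTVS.{u, v, w} V i) {c : X →₀ ℝ}
  (hc : linearCombination ℝ i c ∈ closure (range i))
include hV hc

theorem linearCombination_mul_of_mem_closure {f g : X → ℝ} (hf : Continuous f)
    (hg : Continuous g) :
    linearCombination ℝ (f * g) c = linearCombination ℝ f c * linearCombination ℝ g c := by
  obtain ⟨φf, hφf⟩ := hV.exists_comp_eq hf
  obtain ⟨φg, hφg⟩ := hV.exists_comp_eq hg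
  obtain ⟨φfg, hφfg⟩ := hV.exists_comp_eq (hf.mul hg)
  have hrange : EqOn φfg (⇑φf * ⇑φg) (range i) := by
    rintro _ ⟨x, rfl⟩
    exact (congrFun hφfg x).trans (by rw [← hφf, ← hφg]; rfl)
  have := hrange.closure φfg.continuous (φf.continuous.mul φg.continuous) hc
  simpa only [Pi.mul_apply, φf.apply_linearCombination_of_comp_eq hφf,
    φg.apply_linearCombination_of_comp_eq hφg, φfg.apply_linearCombination_of_comp_eq hφfg]
    using this

theorem linearCombination_one_of_mem_closure : linearCombination ℝ (1 : X → ℝ) c = 1 := by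
  obtain ⟨φ, hφ⟩ := hV.exists_comp_eq (f := 1) continuous_const
  have hrange : EqOn φ 1 (range i) := by
    rintro _ ⟨x, rfl⟩
    exact congrFun hφ x
  rw [← φ.apply_linearCombination_of_comp_eq hφ]
  exact hrange.closure φ.continuous continuous_const hc

end IsFreeTVS

/-- If `X` is a Tychonoff space and `(V, i)` is the free topological vector
space over `X`, then the image `i(X)` of `X` is a closed subspace of `V`. -/
theorem isClosed_range_of_isFreeTVS
    {X : Type u} [TopologicalSpace X] [T35Space X]
    (V : Type v) [AddCommGroup V] [Module ℝ V] [TopologicalSpace V]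
    [IsTopologicalAddGroup V] [ContinuousSMul ℝ V] (i : X → V)
    (hV : IsFreeTVS V i) :
    IsClosed (Set.range i) := by
  refine closure_subset_iff_isClosed.1 fun v hv => ?_
  obtain ⟨c, rfl⟩ : v ∈ LinearMap.range (linearCombination ℝ i) := by
    rw [range_linearCombination, hV.span_range_eq_top]
    trivial
  obtain ⟨x, rfl⟩ := c.exists_eq_single_one_of_linearCombination_mul
    (fun _ _ => hV.linearCombination_mul_of_mem_closure hv)
    (hV.linearCombination_one_of_mem_closure hv)
  exact ⟨x, by simp⟩
end

section
/- Let X be an infinite Tychonoff space. Then the free topological vector space V(X) contains a closed vector subspace which is topologically isomorphic (as a topological vector space) to V(ℕ), the free topological vector space over the countably infinite discrete space ℕ. -/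
open Topology Set

universe u v w

/-- relatively open subset of `E` -/
def RelOpen {Z : Type*} [TopologicalSpace Z] (A E : Set Z) : Prop :=
  ∃ O, IsOpen O ∧ A = O ∩ E

/-- A hemicompact "k_ω" decomposition. -/
structure KOm {Z : Type*} [TopologicalSpace Z] (C : ℕ → Set Z) : Prop where
  mono : Monotone C
  compact : ∀ n, IsCompact (C n)
  covers : ∀ z : Z, ∃ n, z ∈ C n
  isOpen_of : ∀ s : Set Z, (∀ n, RelOpen (s ∩ C n) (C n)) → IsOpen s

lemma KOm.isClosed_of {Z : Type*} [TopologicalSpace Z] {C : ℕ → Set Z} (h : KOm C)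
    (s : Set Z) (hs : ∀ n, ∃ F, IsClosed F ∧ s ∩ C n = F ∩ C n) : IsClosed s := by
  rw [← isOpen_compl_iff]
  apply h.isOpen_of
  intro n
  obtain ⟨F, hF, hFs⟩ := hs n
  refine ⟨Fᶜ, hF.isOpen_compl, ?_⟩
  ext z
  simp only [mem_inter_iff, mem_compl_iff]
  constructor
  · rintro ⟨hz, hzC⟩
    refine ⟨fun hzF => hz ?_, hzC⟩
    have : z ∈ F ∩ C n := ⟨hzF, hzC⟩
    rw [← hFs] at this; exact this.1
  · rintro ⟨hzF, hzC⟩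
    refine ⟨fun hz => hzF ?_, hzC⟩
    have : z ∈ s ∩ C n := ⟨hz, hzC⟩
    rw [hFs] at this; exact this.1

section Prod

variable {Z Y : Type*} [TopologicalSpace Z] [TopologicalSpace Y] [T2Space Z] [T2Space Y]

/-- One inductive step for the k_ω product theorem. -/
lemma kom_step {C : Set Z} {D : Set Y} (hC : IsCompact C) (hD : IsCompact D)
    {W : Set (Z × Y)} (hW : ∃ O, IsOpen O ∧ W ∩ C ×ˢ D = O ∩ C ×ˢ D)
    {S : Set Z} {T : Set Y} (hS : IsCompact S) (hT : IsCompact T)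
    (hSC : S ⊆ C) (hTD : T ⊆ D) (hST : S ×ˢ T ⊆ W) :
    ∃ (A : Set Z) (B : Set Y) (S' : Set Z) (T' : Set Y),
      RelOpen A C ∧ RelOpen B D ∧ IsCompact S' ∧ IsCompact T' ∧
      S ⊆ A ∧ T ⊆ B ∧ A ⊆ S' ∧ B ⊆ T' ∧ S' ⊆ C ∧ T' ⊆ D ∧ S' ×ˢ T' ⊆ W := by
  obtain ⟨O, hO, hOW⟩ := hW
  have hSTO : S ×ˢ T ⊆ O := by
    intro p hp
    have h1 : p ∈ W ∩ C ×ˢ D := ⟨hST hp, ⟨hSC hp.1, hTD hp.2⟩⟩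
    rw [hOW] at h1; exact h1.1
  obtain ⟨U₁, V₁, hU₁, hV₁, hSU, hTV, hUV⟩ := generalized_tube_lemma hS hT hO hSTO
  -- shrink inside the compact Hausdorff subspaces
  haveI : CompactSpace ↥C := isCompact_iff_compactSpace.mp hC
  haveI : CompactSpace ↥D := isCompact_iff_compactSpace.mp hD
  -- Z part
  have hS' : IsClosed ((Subtype.val : ↥C → Z) ⁻¹' S) :=
    (hS.isClosed).preimage continuous_subtype_val
  have hU' : IsOpen ((Subtype.val : ↥C → Z) ⁻¹' U₁) := hU₁.preimage continuous_subtype_val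
  obtain ⟨u, hu, hSu, hcu⟩ := normal_exists_closure_subset hS'
    hU' (fun z hz => hSU hz)
  obtain ⟨Ou, hOu, hOu'⟩ := isOpen_induced_iff.mp hu
  -- Y part
  have hT' : IsClosed ((Subtype.val : ↥D → Y) ⁻¹' T) :=
    (hT.isClosed).preimage continuous_subtype_val
  have hV' : IsOpen ((Subtype.val : ↥D → Y) ⁻¹' V₁) := hV₁.preimage continuous_subtype_val
  obtain ⟨v, hv, hTv, hcv⟩ := normal_exists_closure_subset hT'
    hV' (fun z hz => hTV hz)
  obtain ⟨Ov, hOv, hOv'⟩ := isOpen_induced_iff.mp hv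
  refine ⟨Ou ∩ C, Ov ∩ D, Subtype.val '' (closure u), Subtype.val '' (closure v),
    ⟨Ou, hOu, rfl⟩, ⟨Ov, hOv, rfl⟩,
    (isClosed_closure.isCompact).image continuous_subtype_val,
    (isClosed_closure.isCompact).image continuous_subtype_val,
    ?_, ?_, ?_, ?_, ?_, ?_, ?_⟩
  · -- S ⊆ Ou ∩ C
    intro z hz
    have hzC : z ∈ C := hSC hz
    have : (⟨z, hzC⟩ : ↥C) ∈ u := hSu hz
    rw [← hOu'] at this
    exact ⟨this, hzC⟩
  · intro z hz
    have hzD : z ∈ D := hTD hz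
    have : (⟨z, hzD⟩ : ↥D) ∈ v := hTv hz
    rw [← hOv'] at this
    exact ⟨this, hzD⟩
  · -- Ou ∩ C ⊆ val '' closure u
    rintro z ⟨hzO, hzC⟩
    exact ⟨⟨z, hzC⟩, subset_closure (by rw [← hOu']; exact hzO), rfl⟩
  · rintro z ⟨hzO, hzD⟩
    exact ⟨⟨z, hzD⟩, subset_closure (by rw [← hOv']; exact hzO), rfl⟩
  · rintro z ⟨w, _, rfl⟩; exact w.2
  · rintro z ⟨w, _, rfl⟩; exact w.2
  · -- product inclusion
    rintro ⟨z, y⟩ ⟨⟨zz, hzz, rfl⟩, ⟨yy, hyy, rfl⟩⟩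
    have hz1 : (zz : Z) ∈ U₁ := hcu hzz
    have hy1 : (yy : Y) ∈ V₁ := hcv hyy
    have hO' : ((zz : Z), (yy : Y)) ∈ O := hUV ⟨hz1, hy1⟩
    have : ((zz : Z), (yy : Y)) ∈ O ∩ C ×ˢ D := ⟨hO', ⟨zz.2, yy.2⟩⟩
    rw [← hOW] at this
    exact this.1

/-- The k_ω product theorem: a set whose traces on the `C n ×ˢ D n` are relatively
open is open in the product. -/
theorem KOm.prod_isOpen {C : ℕ → Set Z} {D : ℕ → Set Y} (hC : KOm C) (hD : KOm D)
    {W : Set (Z × Y)} (h : ∀ n, ∃ O, IsOpen O ∧ W ∩ C n ×ˢ D n = O ∩ C n ×ˢ D n) :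
    IsOpen W := by
  rw [isOpen_iff_forall_mem_open]
  rintro ⟨a, b⟩ hab
  obtain ⟨na, hna⟩ := hC.covers a
  obtain ⟨nb, hnb⟩ := hD.covers b
  set n₀ := max na nb with hn₀
  have ha0 : a ∈ C n₀ := hC.mono (le_max_left _ _) hna
  have hb0 : b ∈ D n₀ := hD.mono (le_max_right _ _) hnb
  -- the invariant
  set P : ℕ → Set Z × Set Y → Prop := fun n q =>
    IsCompact q.1 ∧ IsCompact q.2 ∧ q.1 ⊆ C (n₀ + n) ∧ q.2 ⊆ D (n₀ + n) ∧ q.1 ×ˢ q.2 ⊆ W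
    with hP
  have step : ∀ n (q : Set Z × Set Y), P n q →
      ∃ r : (Set Z × Set Y) × (Set Z × Set Y),
        P (n + 1) r.2 ∧ RelOpen r.1.1 (C (n₀ + n + 1)) ∧ RelOpen r.1.2 (D (n₀ + n + 1)) ∧
        q.1 ⊆ r.1.1 ∧ q.2 ⊆ r.1.2 ∧ r.1.1 ⊆ r.2.1 ∧ r.1.2 ⊆ r.2.2 := by
    rintro n ⟨S, T⟩ ⟨h1, h2, h3, h4, h5⟩
    obtain ⟨A, B, S', T', rA, rB, cS', cT', hSA, hTB, hAS', hBT', hS'C, hT'D, hprod⟩ :=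
      kom_step (hC.compact (n₀ + n + 1)) (hD.compact (n₀ + n + 1)) (h (n₀ + n + 1))
        h1 h2 (h3.trans (hC.mono (Nat.le_succ _))) (h4.trans (hD.mono (Nat.le_succ _))) h5
    exact ⟨((A, B), (S', T')), ⟨cS', cT', hS'C, hT'D, hprod⟩, rA, rB, hSA, hTB, hAS', hBT'⟩
  -- build the recursive sequence
  have base : P 0 ({a}, {b}) := by
    refine ⟨isCompact_singleton, isCompact_singleton, ?_, ?_, ?_⟩
    · simpa using hC.mono (Nat.le_add_right n₀ 0) ha0
    · simpa using hD.mono (Nat.le_add_right n₀ 0) hb0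
    · rintro ⟨z, y⟩ ⟨hz, hy⟩
      simp only [mem_singleton_iff] at hz hy
      rw [hz, hy]; exact hab
  let G : ∀ n : ℕ, {q : Set Z × Set Y // P n q} := fun n =>
    Nat.rec ⟨({a}, {b}), base⟩
      (fun n ih => ⟨(Classical.choose (step n ih.1 ih.2)).2,
        (Classical.choose_spec (step n ih.1 ih.2)).1⟩) n
  let AB : ℕ → Set Z × Set Y := fun n => (Classical.choose (step n (G n).1 (G n).2)).1
  have hGsucc : ∀ n, (G (n + 1)).1 = (Classical.choose (step n (G n).1 (G n).2)).2 := fun n => rfl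
  have spec : ∀ n, P (n + 1) (G (n+1)).1 ∧ RelOpen (AB n).1 (C (n₀ + n + 1)) ∧
      RelOpen (AB n).2 (D (n₀ + n + 1)) ∧
      (G n).1.1 ⊆ (AB n).1 ∧ (G n).1.2 ⊆ (AB n).2 ∧
      (AB n).1 ⊆ (G (n+1)).1.1 ∧ (AB n).2 ⊆ (G (n+1)).1.2 := by
    intro n
    have := Classical.choose_spec (step n (G n).1 (G n).2)
    rw [← hGsucc n] at this
    exact this
  -- monotonicity of the A's
  have hABmono1 : ∀ n, (AB n).1 ⊆ (AB (n+1)).1 := fun n =>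
    ((spec n).2.2.2.2.2.1).trans ((spec (n+1)).2.2.2.1)
  have hABmono2 : ∀ n, (AB n).2 ⊆ (AB (n+1)).2 := fun n =>
    ((spec n).2.2.2.2.2.2).trans ((spec (n+1)).2.2.2.2.1)
  have hABmono1' : ∀ {m n}, m ≤ n → (AB m).1 ⊆ (AB n).1 := by
    intro m n hmn
    induction hmn with
    | refl => exact subset_rfl
    | step h ih => exact ih.trans (hABmono1 _)
  have hABmono2' : ∀ {m n}, m ≤ n → (AB m).2 ⊆ (AB n).2 := by
    intro m n hmn
    induction hmn with
    | refl => exact subset_rfl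
    | step h ih => exact ih.trans (hABmono2 _)
  refine ⟨(⋃ n, (AB n).1) ×ˢ (⋃ n, (AB n).2), ?_, ?_, ?_, ?_⟩
  · -- contained in W
    rintro ⟨z, y⟩ ⟨hz, hy⟩
    obtain ⟨n, hzn⟩ := mem_iUnion.mp hz
    obtain ⟨m, hym⟩ := mem_iUnion.mp hy
    have hz' : z ∈ (G (max n m + 1)).1.1 :=
      (spec (max n m)).2.2.2.2.2.1 (hABmono1' (le_max_left n m) hzn)
    have hy' : y ∈ (G (max n m + 1)).1.2 :=
      (spec (max n m)).2.2.2.2.2.2 (hABmono2' (le_max_right n m) hym)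
    exact (G (max n m + 1)).2.2.2.2.2 ⟨hz', hy'⟩
  · -- open
    apply IsOpen.prod
    · apply hC.isOpen_of
      intro m
      have key : ∀ n, ∃ O, IsOpen O ∧ (AB n).1 = O ∩ C (n₀ + n + 1) := fun n => (spec n).2.1
      choose O hOopen hOeq using key
      refine ⟨⋃ n, O (m + n), isOpen_iUnion fun n => hOopen _, ?_⟩
      ext z
      simp only [mem_inter_iff, mem_iUnion]
      constructor
      · rintro ⟨hz, hzm⟩
        obtain ⟨n, hzn⟩ := hz
        have hzn' : z ∈ (AB (m + n)).1 := hABmono1' (Nat.le_add_left n m) hzn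
        rw [hOeq] at hzn'
        exact ⟨⟨n, hzn'.1⟩, hzm⟩
      · rintro ⟨⟨n, hzO⟩, hzm⟩
        have hh : z ∈ (AB (m + n)).1 := by
          rw [hOeq]
          exact ⟨hzO, hC.mono (by omega) hzm⟩
        exact ⟨⟨m + n, hh⟩, hzm⟩
    · apply hD.isOpen_of
      intro m
      have key : ∀ n, ∃ O, IsOpen O ∧ (AB n).2 = O ∩ D (n₀ + n + 1) := fun n => (spec n).2.2.1
      choose O hOopen hOeq using key
      refine ⟨⋃ n, O (m + n), isOpen_iUnion fun n => hOopen _, ?_⟩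
      ext z
      simp only [mem_inter_iff, mem_iUnion]
      constructor
      · rintro ⟨hz, hzm⟩
        obtain ⟨n, hzn⟩ := hz
        have hzn' : z ∈ (AB (m + n)).2 := hABmono2' (Nat.le_add_left n m) hzn
        rw [hOeq] at hzn'
        exact ⟨⟨n, hzn'.1⟩, hzm⟩
      · rintro ⟨⟨n, hzO⟩, hzm⟩
        have hh : z ∈ (AB (m + n)).2 := by
          rw [hOeq]
          exact ⟨hzO, hD.mono (by omega) hzm⟩
        exact ⟨⟨m + n, hh⟩, hzm⟩
  · show a ∈ ⋃ n, (AB n).1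
    exact mem_iUnion.mpr ⟨0, (spec 0).2.2.2.1 rfl⟩
  · show b ∈ ⋃ n, (AB n).2
    exact mem_iUnion.mpr ⟨0, (spec 0).2.2.2.2.1 rfl⟩

end Prod


open Topology Set Finsupp

noncomputable section

abbrev Kc : Type := ℕ → unitInterval

abbrev FV : Type := Kc →₀ ℝ

namespace FVCore

/-- parameter domain -/
abbrev pdom (n : ℕ) : Type := (Fin n → Icc (-(n:ℝ)) (n:ℝ)) × (Fin n → Kc)

def pmap (n : ℕ) : pdom n → FV := fun q => ∑ i, (q.1 i : ℝ) • Finsupp.single (q.2 i) (1:ℝ)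

instance tFV : TopologicalSpace FV := ⨆ n, TopologicalSpace.coinduced (pmap n) inferInstance

lemma isOpen_FV_iff {s : Set FV} : IsOpen s ↔ ∀ n, IsOpen ((pmap n) ⁻¹' s) := by
  rw [isOpen_iSup_iff]
  exact forall_congr' fun n => isOpen_coinduced

lemma continuous_pmap (n : ℕ) : Continuous (pmap n) :=
  continuous_iSup_rng (i := n) continuous_coinduced_rng

lemma continuous_from_FV {Z : Type*} [TopologicalSpace Z] {f : FV → Z}
    (h : ∀ n, Continuous (f ∘ pmap n)) : Continuous f :=
  continuous_iSup_dom.mpr fun n => continuous_coinduced_dom.mpr (h n)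

/-- padding sums of weighted singles -/
lemma pad_eq {k N : ℕ} (hk : k ≤ N) (c : Fin k → ℝ) (x : Fin k → Kc) :
    (∑ j : Fin N, (if h : (j : ℕ) < k then c ⟨j, h⟩ else 0) •
      Finsupp.single (if h : (j : ℕ) < k then x ⟨j, h⟩ else fun _ => 0) (1:ℝ)) =
    ∑ i : Fin k, c i • Finsupp.single (x i) (1:ℝ) := by
  have h2 : (∑ j ∈ Finset.range k, (if h : j < k then c ⟨j, h⟩ else 0) •
      Finsupp.single (if h : j < k then x ⟨j, h⟩ else fun _ => 0) (1:ℝ)) =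
      ∑ i : Fin k, c i • Finsupp.single (x i) (1:ℝ) := by
    rw [← Fin.sum_univ_eq_sum_range]
    apply Finset.sum_congr rfl
    intro i _
    simp [i.isLt]
  rw [← h2, Fin.sum_univ_eq_sum_range (fun j => (if h : j < k then c ⟨j, h⟩ else 0) •
      Finsupp.single (if h : j < k then x ⟨j, h⟩ else fun _ => 0) (1:ℝ)) N]
  exact (Finset.sum_subset (Finset.range_subset_range.mpr hk) (by
    intro j hjN hjk
    rw [Finset.mem_range] at hjk
    simp [hjk])).symm

/-- generic continuity of weighted-singles sums with a uniform bound -/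
lemma continuous_P {ι : Type} [Fintype ι] (m : ℕ) :
    Continuous (fun q : (ι → Icc (-(m:ℝ)) (m:ℝ)) × (ι → Kc) =>
      (∑ i, (q.1 i : ℝ) • Finsupp.single (q.2 i) (1:ℝ) : FV)) := by
  classical
  obtain ⟨k, ⟨e⟩⟩ : ∃ k, Nonempty (ι ≃ Fin k) := ⟨Fintype.card ι, ⟨Fintype.equivFin ι⟩⟩
  set N := max k m with hN
  have hkN : k ≤ N := le_max_left _ _
  have hmN : (m:ℝ) ≤ (N:ℝ) := by exact_mod_cast le_max_right k m
  set r : ((ι → Icc (-(m:ℝ)) (m:ℝ)) × (ι → Kc)) → pdom N := fun q =>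
    (fun j => if h : (j : ℕ) < k then
        ⟨(q.1 (e.symm ⟨j, h⟩) : ℝ), by
          have h2 := (q.1 (e.symm ⟨j, h⟩)).2
          rw [mem_Icc] at h2 ⊢
          exact ⟨by linarith [h2.1], by linarith [h2.2]⟩⟩
      else ⟨0, by
        rw [mem_Icc]
        exact ⟨neg_nonpos.mpr (Nat.cast_nonneg _), Nat.cast_nonneg _⟩⟩,
      fun j => if h : (j : ℕ) < k then q.2 (e.symm ⟨j, h⟩) else fun _ => 0) with hr
  have hcont_r : Continuous r := by
    apply Continuous.prodMk
    · apply continuous_pi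
      intro j
      by_cases h : (j : ℕ) < k
      · simp only [hr, dif_pos h]
        exact (continuous_subtype_val.comp ((continuous_apply _).comp continuous_fst)).subtype_mk _
      · simp only [hr, dif_neg h]
        exact continuous_const
    · apply continuous_pi
      intro j
      by_cases h : (j : ℕ) < k
      · simp only [hr, dif_pos h]
        exact (continuous_apply _).comp continuous_snd
      · simp only [hr, dif_neg h]
        exact continuous_const
  have key : ∀ q, pmap N (r q) = ∑ i, (q.1 i : ℝ) • Finsupp.single (q.2 i) (1:ℝ) := by
    intro q
    have h3 : (∑ i, ((q.1 i : ℝ)) • Finsupp.single (q.2 i) (1:ℝ)) =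
        ∑ j : Fin k, ((q.1 (e.symm j) : ℝ)) • Finsupp.single (q.2 (e.symm j)) (1:ℝ) :=
      (Equiv.sum_comp e.symm (fun i => ((q.1 i : ℝ)) • Finsupp.single (q.2 i) (1:ℝ))).symm
    rw [h3, ← pad_eq hkN (fun j => (q.1 (e.symm j) : ℝ)) (fun j => q.2 (e.symm j))]
    simp only [pmap, hr]
    apply Finset.sum_congr rfl
    intro j _
    by_cases h : (j : ℕ) < k <;> simp [h]
  have heq : (fun q : (ι → Icc (-(m:ℝ)) (m:ℝ)) × (ι → Kc) =>
      (∑ i, (q.1 i : ℝ) • Finsupp.single (q.2 i) (1:ℝ) : FV)) = (pmap N) ∘ r := by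
    ext q : 1
    rw [Function.comp_apply, key]
  rw [heq]
  exact (continuous_pmap N).comp hcont_r

def SP (n : ℕ) : Set FV := range (pmap n)

lemma isCompact_SP (n : ℕ) : IsCompact (SP n) := isCompact_range (continuous_pmap n)

lemma mem_SP_of {k n : ℕ} (hk : k ≤ n) (c : Fin k → ℝ) (x : Fin k → Kc)
    (hc : ∀ i, |c i| ≤ (n:ℝ)) : (∑ i, c i • Finsupp.single (x i) (1:ℝ)) ∈ SP n := by
  have hb : ∀ (j : Fin n), (if h : (j:ℕ) < k then c ⟨j,h⟩ else 0) ∈ Icc (-(n:ℝ)) (n:ℝ) := by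
    intro j
    by_cases h : (j:ℕ) < k
    · rw [dif_pos h, mem_Icc]
      exact abs_le.mp (hc _)
    · rw [dif_neg h, mem_Icc]
      exact ⟨neg_nonpos.mpr (Nat.cast_nonneg _), Nat.cast_nonneg _⟩
  refine ⟨(fun j => ⟨_, hb j⟩, fun j => if h : (j:ℕ) < k then x ⟨j,h⟩ else fun _ => 0), ?_⟩
  show pmap n _ = _
  rw [← pad_eq hk c x]
  simp only [pmap]

lemma SP_mono : Monotone SP := by
  intro a b hab v hv
  obtain ⟨q, rfl⟩ := hv
  show pmap a q ∈ SP b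
  rw [pmap]
  apply mem_SP_of hab
  intro i
  have h2 := (q.1 i).2
  rw [mem_Icc] at h2
  rw [abs_le]
  have hab' : (a:ℝ) ≤ (b:ℝ) := by exact_mod_cast hab
  exact ⟨by linarith [h2.1], by linarith [h2.2]⟩

lemma SP_covers (v : FV) : ∃ n, v ∈ SP n := by
  classical
  set k := v.support.card with hk
  set B := ∑ t ∈ v.support, ⌈|v t|⌉₊ with hB
  set e : Fin k ≃ {x // x ∈ v.support} := v.support.equivFin.symm with he
  refine ⟨k + B, ?_⟩
  have hrepr : v = ∑ i : Fin k, v ((e i : Kc)) • Finsupp.single ((e i : Kc)) (1:ℝ) := by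
    calc v = ∑ t ∈ v.support, v t • Finsupp.single t (1:ℝ) := by
            conv_lhs => rw [← Finsupp.sum_single v]
            rw [Finsupp.sum]
            exact Finset.sum_congr rfl fun t _ => by
              rw [Finsupp.smul_single, smul_eq_mul, mul_one]
      _ = ∑ s : {x // x ∈ v.support}, v (s:Kc) • Finsupp.single ((s:Kc)) (1:ℝ) :=
            (Finset.sum_coe_sort v.support (fun t => v t • Finsupp.single t (1:ℝ))).symm
      _ = ∑ i : Fin k, v ((e i : Kc)) • Finsupp.single ((e i : Kc)) (1:ℝ) :=
            (Equiv.sum_comp e (fun s : {x // x ∈ v.support} =>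
              v (s:Kc) • Finsupp.single ((s:Kc)) (1:ℝ))).symm
  rw [hrepr]
  apply mem_SP_of (Nat.le_add_right _ _)
  intro i
  have h1 : |v ((e i : Kc))| ≤ (⌈|v ((e i : Kc))|⌉₊ : ℝ) := Nat.le_ceil _
  have h2 : ⌈|v ((e i : Kc))|⌉₊ ≤ B := by
    rw [hB]
    exact Finset.single_le_sum (f := fun t => ⌈|v t|⌉₊) (fun _ _ => Nat.zero_le _) (e i).2
  calc |v ((e i : Kc))| ≤ (⌈|v ((e i : Kc))|⌉₊ : ℝ) := h1
    _ ≤ (B : ℝ) := by exact_mod_cast h2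
    _ ≤ ((k + B : ℕ) : ℝ) := by exact_mod_cast Nat.le_add_left _ _

lemma komSP : KOm SP where
  mono := SP_mono
  compact := isCompact_SP
  covers := SP_covers
  isOpen_of := by
    intro s hs
    rw [isOpen_FV_iff]
    intro n
    obtain ⟨O, hO, hOs⟩ := hs n
    have heq : (pmap n) ⁻¹' s = (pmap n) ⁻¹' O := by
      ext q
      constructor
      · intro hq
        have h2 : pmap n q ∈ s ∩ SP n := ⟨hq, ⟨q, rfl⟩⟩
        rw [hOs] at h2
        exact h2.1
      · intro hq
        have h2 : pmap n q ∈ O ∩ SP n := ⟨hq, ⟨q, rfl⟩⟩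
        rw [← hOs] at h2
        exact h2.1
    rw [heq]
    exact hO.preimage (continuous_pmap n)


/-- evaluation functionals against a continuous function on `Kc` -/
lemma continuous_lF (h : Kc → ℝ) (hh : Continuous h) : Continuous (Finsupp.linearCombination ℝ h : FV →ₗ[ℝ] ℝ) := by
  apply continuous_from_FV
  intro n
  have heq : ((Finsupp.linearCombination ℝ h : FV →ₗ[ℝ] ℝ) ∘ pmap n) =
      fun q : pdom n => ∑ i, (q.1 i : ℝ) * h (q.2 i) := by
    ext q
    simp only [Function.comp_apply, pmap, map_sum, map_smul,
      Finsupp.linearCombination_single, smul_eq_mul, one_mul, mul_one]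
  rw [heq]
  exact continuous_finset_sum _ fun i _ =>
    (continuous_subtype_val.comp ((continuous_apply i).comp continuous_fst)).mul
      (hh.comp ((continuous_apply i).comp continuous_snd))

instance t2FV : T2Space FV := by
  classical
  constructor
  intro v w hvw
  have hd : v - w ≠ 0 := sub_ne_zero.mpr hvw
  obtain ⟨t₀, ht₀⟩ := Finsupp.support_nonempty_iff.mpr hd
  have hclosed1 : IsClosed ((((v-w).support.erase t₀) : Finset Kc) : Set Kc) :=
    (Finset.finite_toSet _).isClosed
  have hclosed2 : IsClosed ({t₀} : Set Kc) := isClosed_singleton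
  have hdisj : Disjoint ((((v-w).support.erase t₀) : Finset Kc) : Set Kc) ({t₀} : Set Kc) := by
    rw [Set.disjoint_singleton_right]
    simp
  obtain ⟨f, hf0, hf1, _⟩ := exists_continuous_zero_one_of_isClosed hclosed1 hclosed2 hdisj
  have hval : Finsupp.linearCombination ℝ (f : Kc → ℝ) (v - w) = (v - w) t₀ := by
    rw [Finsupp.linearCombination_apply, Finsupp.sum,
      Finset.sum_eq_single_of_mem t₀ ht₀ (fun b hb hbne => by
        have : f b = 0 := hf0 (by exact Finset.mem_coe.mpr (Finset.mem_erase.mpr ⟨hbne, hb⟩))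
        rw [this, smul_eq_mul, mul_zero])]
    have : f t₀ = 1 := hf1 rfl
    rw [this, smul_eq_mul, mul_one]
  have hne : Finsupp.linearCombination ℝ (f : Kc → ℝ) v ≠
      Finsupp.linearCombination ℝ (f : Kc → ℝ) w := by
    intro hcon
    have h0 : Finsupp.linearCombination ℝ (f : Kc → ℝ) (v - w) = 0 := by
      rw [map_sub, hcon, sub_self]
    rw [hval] at h0
    exact (Finsupp.mem_support_iff.mp ht₀) h0
  exact separated_by_continuous (continuous_lF (f : Kc → ℝ) f.continuous) hne

/-- transfer of relative openness along quotient maps from compacta -/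
lemma relopen_of_quotient {A Z : Type*} [TopologicalSpace A] [TopologicalSpace Z] [CompactSpace A]
    [T2Space Z] {f : A → Z} (hf : Continuous f) {E : Set Z} (hE : range f = E) {W : Set Z}
    (h : IsOpen (f ⁻¹' W)) : ∃ O, IsOpen O ∧ W ∩ E = O ∩ E := by
  set f' : A → ↥E := fun a => ⟨f a, hE ▸ mem_range_self a⟩ with hf'
  have hc : Continuous f' := hf.subtype_mk _
  have hsur : Function.Surjective f' := by
    rintro ⟨z, hz⟩
    rw [← hE] at hz
    obtain ⟨a, ha⟩ := hz
    exact ⟨a, Subtype.ext ha⟩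
  have hq : IsQuotientMap f' := (hc.isClosedMap).isQuotientMap hc hsur
  have hopen : IsOpen ((Subtype.val : ↥E → Z) ⁻¹' W) := by
    rw [← hq.isOpen_preimage]
    exact h
  obtain ⟨O, hO, hOW⟩ := isOpen_induced_iff.mp hopen
  refine ⟨O, hO, ?_⟩
  ext z
  constructor
  · rintro ⟨hzW, hzE⟩
    have h2 : (⟨z, hzE⟩ : ↥E) ∈ (Subtype.val : ↥E → Z) ⁻¹' O := by
      rw [hOW]
      exact hzW
    exact ⟨h2, hzE⟩
  · rintro ⟨hzO, hzE⟩
    have h2 : (⟨z, hzE⟩ : ↥E) ∈ (Subtype.val : ↥E → Z) ⁻¹' W := by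
      rw [← hOW]
      exact hzO
    exact ⟨h2, hzE⟩

instance : ContinuousAdd FV := by
  constructor
  rw [continuous_def]
  intro U hU
  apply KOm.prod_isOpen komSP komSP
  intro n
  have hrange : range (fun pq : pdom n × pdom n => (pmap n pq.1, pmap n pq.2)) =
      SP n ×ˢ SP n := by
    ext ⟨z1, z2⟩
    constructor
    · rintro ⟨⟨q1, q2⟩, heq⟩
      rw [Prod.ext_iff] at heq
      exact ⟨⟨q1, heq.1⟩, ⟨q2, heq.2⟩⟩
    · rintro ⟨⟨q1, h1⟩, ⟨q2, h2⟩⟩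
      exact ⟨(q1, q2), Prod.ext h1 h2⟩
  apply relopen_of_quotient (continuous_pmap n |>.comp continuous_fst |>.prodMk
    (continuous_pmap n |>.comp continuous_snd)) hrange
  -- openness of the preimage
  have hcont : Continuous (fun pq : pdom n × pdom n => pmap n pq.1 + pmap n pq.2) := by
    have hφ : Continuous (fun pq : pdom n × pdom n =>
        ((Sum.elim pq.1.1 pq.2.1 : Fin n ⊕ Fin n → Icc (-(n:ℝ)) (n:ℝ)),
         (Sum.elim pq.1.2 pq.2.2 : Fin n ⊕ Fin n → Kc))) := by
      apply Continuous.prodMk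
      · apply continuous_pi
        rintro (i | i)
        · exact (continuous_apply i).comp (continuous_fst.comp continuous_fst)
        · exact (continuous_apply i).comp (continuous_fst.comp continuous_snd)
      · apply continuous_pi
        rintro (i | i)
        · exact (continuous_apply i).comp (continuous_snd.comp continuous_fst)
        · exact (continuous_apply i).comp (continuous_snd.comp continuous_snd)
    have heq : (fun pq : pdom n × pdom n => pmap n pq.1 + pmap n pq.2) =
        (fun q : ((Fin n ⊕ Fin n) → Icc (-(n:ℝ)) (n:ℝ)) × ((Fin n ⊕ Fin n) → Kc) =>
          (∑ i, (q.1 i : ℝ) • Finsupp.single (q.2 i) (1:ℝ) : FV)) ∘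
        (fun pq => (Sum.elim pq.1.1 pq.2.1, Sum.elim pq.1.2 pq.2.2)) := by
      ext pq
      simp only [Function.comp_apply, pmap, Fintype.sum_sum_type, Sum.elim_inl, Sum.elim_inr]
    rw [heq]
    exact (continuous_P n).comp hφ
  exact hU.preimage hcont

instance : ContinuousNeg FV := by
  constructor
  apply continuous_from_FV
  intro n
  have hb : ∀ (q : pdom n) (j : Fin n), -(q.1 j : ℝ) ∈ Icc (-(n:ℝ)) (n:ℝ) := by
    intro q j
    have h2 := (q.1 j).2
    rw [mem_Icc] at h2 ⊢
    exact ⟨by linarith [h2.2], by linarith [h2.1]⟩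
  have heq : (Neg.neg ∘ pmap n) = (fun q : (Fin n → Icc (-(n:ℝ)) (n:ℝ)) × (Fin n → Kc) =>
      (∑ i, (q.1 i : ℝ) • Finsupp.single (q.2 i) (1:ℝ) : FV)) ∘
      (fun q : pdom n => (fun j => ⟨-(q.1 j : ℝ), hb q j⟩, q.2)) := by
    ext q
    simp only [Function.comp_apply, pmap, ← Finset.sum_neg_distrib, neg_smul]
  rw [heq]
  refine (continuous_P n).comp (Continuous.prodMk (continuous_pi fun j => ?_) continuous_snd)
  exact ((continuous_subtype_val.comp (continuous_apply j |>.comp continuous_fst)).neg).subtype_mk _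

instance : IsTopologicalAddGroup FV :=
  { continuous_add := continuous_add, continuous_neg := continuous_neg }

lemma komIcc : KOm (fun n : ℕ => Icc (-(n:ℝ)) (n:ℝ)) where
  mono := by
    intro a b hab
    have hab' : (a:ℝ) ≤ (b:ℝ) := by exact_mod_cast hab
    exact Icc_subset_Icc (by linarith) hab'
  compact := fun n => isCompact_Icc
  covers := by
    intro z
    refine ⟨⌈|z|⌉₊, ?_⟩
    rw [mem_Icc, ← abs_le]
    exact Nat.le_ceil _
  isOpen_of := by
    intro s hs
    rw [isOpen_iff_forall_mem_open]
    intro x hx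
    set m := ⌈|x|⌉₊ + 1 with hm
    have hxm : |x| < (m:ℝ) := by
      have h1 : |x| ≤ (⌈|x|⌉₊ : ℝ) := Nat.le_ceil _
      have h2 : ((⌈|x|⌉₊ : ℕ) : ℝ) < (m : ℝ) := by exact_mod_cast Nat.lt_succ_self _
      linarith
    obtain ⟨O, hO, hOs⟩ := hs m
    refine ⟨O ∩ Ioo (-(m:ℝ)) (m:ℝ), ?_, hO.inter isOpen_Ioo, ?_⟩
    · intro z hz
      have h3 : z ∈ O ∩ Icc (-(m:ℝ)) (m:ℝ) := ⟨hz.1, Ioo_subset_Icc_self hz.2⟩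
      rw [← hOs] at h3
      exact h3.1
    · have hxIcc : x ∈ Icc (-(m:ℝ)) (m:ℝ) := by
        rw [mem_Icc, ← abs_le]
        exact hxm.le
      have h4 : x ∈ O ∩ Icc (-(m:ℝ)) (m:ℝ) := by
        rw [← hOs]
        exact ⟨hx, hxIcc⟩
      refine ⟨h4.1, ?_⟩
      rw [mem_Ioo, ← abs_lt]
      exact hxm

instance : ContinuousSMul ℝ FV := by
  constructor
  rw [continuous_def]
  intro U hU
  apply KOm.prod_isOpen komIcc komSP
  intro n
  have hrange : range (fun cq : Icc (-(n:ℝ)) (n:ℝ) × pdom n => ((cq.1 : ℝ), pmap n cq.2)) =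
      Icc (-(n:ℝ)) (n:ℝ) ×ˢ SP n := by
    ext ⟨z1, z2⟩
    constructor
    · rintro ⟨⟨c, q⟩, heq⟩
      rw [Prod.ext_iff] at heq
      exact ⟨heq.1 ▸ c.2, ⟨q, heq.2⟩⟩
    · rintro ⟨h1, ⟨q, h2⟩⟩
      exact ⟨(⟨z1, h1⟩, q), Prod.ext rfl h2⟩
  apply relopen_of_quotient (continuous_subtype_val.comp continuous_fst |>.prodMk
    ((continuous_pmap n).comp continuous_snd)) hrange
  have hb : ∀ (cq : Icc (-(n:ℝ)) (n:ℝ) × pdom n) (j : Fin n),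
      (cq.1 : ℝ) * (cq.2.1 j : ℝ) ∈ Icc (-(((n*n : ℕ)):ℝ)) (((n*n : ℕ)):ℝ) := by
    intro cq j
    have h1 := cq.1.2
    have h2 := (cq.2.1 j).2
    rw [mem_Icc] at h1 h2 ⊢
    have hc : |(cq.1 : ℝ)| ≤ (n:ℝ) := abs_le.mpr ⟨h1.1, h1.2⟩
    have ha : |(cq.2.1 j : ℝ)| ≤ (n:ℝ) := abs_le.mpr ⟨h2.1, h2.2⟩
    have habs : |(cq.1 : ℝ) * (cq.2.1 j : ℝ)| ≤ (n:ℝ) * (n:ℝ) :=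
      (abs_mul _ _).le.trans (mul_le_mul hc ha (abs_nonneg _) (Nat.cast_nonneg _))
    rw [← abs_le]
    calc |(cq.1 : ℝ) * (cq.2.1 j : ℝ)| ≤ (n:ℝ) * (n:ℝ) := habs
      _ = (((n*n : ℕ)):ℝ) := by push_cast; ring
  have hcont : Continuous (fun cq : Icc (-(n:ℝ)) (n:ℝ) × pdom n => (cq.1 : ℝ) • pmap n cq.2) := by
    have heq : (fun cq : Icc (-(n:ℝ)) (n:ℝ) × pdom n => (cq.1 : ℝ) • pmap n cq.2) =
        (fun q : (Fin n → Icc (-(((n*n : ℕ)):ℝ)) (((n*n : ℕ)):ℝ)) × (Fin n → Kc) =>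
          (∑ i, (q.1 i : ℝ) • Finsupp.single (q.2 i) (1:ℝ) : FV)) ∘
        (fun cq => (fun j => ⟨(cq.1 : ℝ) * (cq.2.1 j : ℝ), hb cq j⟩, cq.2.2)) := by
      ext cq
      simp only [Function.comp_apply, pmap, Finset.smul_sum, smul_smul]
    rw [heq]
    refine (continuous_P (n*n)).comp (Continuous.prodMk (continuous_pi fun j => ?_)
      ((continuous_snd.comp continuous_snd)))
    exact ((continuous_subtype_val.comp continuous_fst).mul
      (continuous_subtype_val.comp ((continuous_apply j).comp
        (continuous_fst.comp continuous_snd)))).subtype_mk _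
  exact hU.preimage hcont


lemma supp_card_SP {v : FV} {n : ℕ} (hv : v ∈ SP n) : v.support.card ≤ n := by
  classical
  obtain ⟨q, rfl⟩ := hv
  have hsub : (pmap n q).support ⊆ Finset.image q.2 Finset.univ := by
    refine (Finsupp.support_finset_sum).trans ?_
    intro t ht
    rw [Finset.mem_biUnion] at ht
    obtain ⟨i, _, hti⟩ := ht
    have h2 : t ∈ ((Finsupp.single (q.2 i) (1:ℝ)).support : Finset Kc) :=
      Finsupp.support_smul hti
    have h3 := Finsupp.support_single_subset h2
    rw [Finset.mem_singleton] at h3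
    rw [Finset.mem_image]
    exact ⟨i, Finset.mem_univ i, h3.symm⟩
  calc (pmap n q).support.card ≤ (Finset.image q.2 Finset.univ).card := Finset.card_le_card hsub
    _ ≤ Finset.univ.card := Finset.card_image_le
    _ = n := by simp

lemma continuous_single_one : Continuous (fun t : Kc => (Finsupp.single t (1:ℝ) : FV)) := by
  have hb : (1:ℝ) ∈ Icc (-((1:ℕ):ℝ)) ((1:ℕ):ℝ) := by
    rw [mem_Icc]; norm_num
  have heq : (fun t : Kc => (Finsupp.single t (1:ℝ) : FV)) =
      (fun q : (Fin 1 → Icc (-((1:ℕ):ℝ)) ((1:ℕ):ℝ)) × (Fin 1 → Kc) =>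
        (∑ i, (q.1 i : ℝ) • Finsupp.single (q.2 i) (1:ℝ) : FV)) ∘
      (fun t => (fun _ => ⟨1, hb⟩, fun _ => t)) := by
    ext t
    simp
  rw [heq]
  exact (continuous_P 1).comp (continuous_const.prodMk (continuous_pi fun _ => continuous_id))

section Span

variable (t2 : ℕ × ℕ ↪ Kc)

/-- the generating vectors: `wv k` has support of size `k+1` -/
def wv (k : ℕ) : FV := ∑ i : Fin (k+1), Finsupp.single (t2 (k, (i:ℕ))) (1:ℝ)

lemma wv_apply_self {k i : ℕ} (hi : i ≤ k) : (wv t2 k) (t2 (k, i)) = 1 := by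
  classical
  rw [wv, Finset.sum_apply']
  rw [Finset.sum_eq_single_of_mem (⟨i, Nat.lt_succ_of_le hi⟩ : Fin (k+1)) (Finset.mem_univ _)]
  · simp [Finsupp.single_apply]
  · intro j _ hji
    rw [Finsupp.single_apply, if_neg, ]
    intro hcon
    apply hji
    have := t2.injective hcon
    rw [Prod.ext_iff] at this
    exact Fin.ext this.2

lemma wv_apply_ne {k k' i : ℕ} (hne : k' ≠ k) : (wv t2 k') (t2 (k, i)) = 0 := by
  classical
  rw [wv, Finset.sum_apply']
  apply Finset.sum_eq_zero
  intro j _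
  rw [Finsupp.single_apply, if_neg]
  intro hcon
  apply hne
  have := t2.injective hcon
  rw [Prod.ext_iff] at this
  exact this.1

lemma eval_combo (c : ℕ →₀ ℝ) {k i : ℕ} (hi : i ≤ k) :
    (c.sum fun k' a => a • wv t2 k') (t2 (k, i)) = c k := by
  classical
  rw [Finsupp.sum_apply]
  rw [Finsupp.sum_eq_single k (fun k' hk' hne => by
      rw [Finsupp.smul_apply, wv_apply_ne t2 hne, smul_zero])
    (fun _ => by rw [zero_smul, Finsupp.coe_zero, Pi.zero_apply])]
  rw [Finsupp.smul_apply, wv_apply_self t2 hi, smul_eq_mul, mul_one]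

lemma linIndep_wv : LinearIndependent ℝ (wv t2) := by
  classical
  rw [linearIndependent_iff]
  intro c hc
  ext k
  have h1 : (c.sum fun k' a => a • wv t2 k') (t2 (k, 0)) = c k := eval_combo t2 c (Nat.zero_le k)
  rw [Finsupp.linearCombination_apply] at hc
  rw [hc] at h1
  simpa using h1.symm

lemma span_cap_SP {n : ℕ} {s : FV} (hs : s ∈ Submodule.span ℝ (range (wv t2)))
    (hSP : s ∈ SP n) : s ∈ Submodule.span ℝ ((wv t2) '' (Iio n)) := by
  classical
  obtain ⟨c, rfl⟩ := Finsupp.mem_span_range_iff_exists_finsupp.mp hs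
  have hsmall : ∀ k ∈ c.support, k < n := by
    intro k hk
    by_contra hcon
    push_neg at hcon
    have himg : (Finset.image (fun i : Fin (k+1) => t2 (k, (i:ℕ))) Finset.univ) ⊆
        (c.sum fun k' a => a • wv t2 k').support := by
      intro t ht
      rw [Finset.mem_image] at ht
      obtain ⟨i, _, rfl⟩ := ht
      rw [Finsupp.mem_support_iff, eval_combo t2 c (Nat.lt_succ_iff.mp i.isLt)]
      exact Finsupp.mem_support_iff.mp hk
    have hcard1 : (Finset.image (fun i : Fin (k+1) => t2 (k, (i:ℕ))) Finset.univ).card = k + 1 := by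
      rw [Finset.card_image_of_injective _ (fun a b hab => by
        have := t2.injective hab
        rw [Prod.ext_iff] at this
        exact Fin.ext this.2)]
      simp
    have hcard2 := Finset.card_le_card himg
    rw [hcard1] at hcard2
    have hcard3 := supp_card_SP hSP
    omega
  rw [Finsupp.sum]
  apply Submodule.sum_mem
  intro k hk
  apply Submodule.smul_mem
  apply Submodule.subset_span
  exact ⟨k, hsmall k hk, rfl⟩

/-- the span of the `wv` is a closed subspace -/
lemma isClosed_span_wv : IsClosed ((Submodule.span ℝ (range (wv t2)) : Submodule ℝ FV) : Set FV) := by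
  apply komSP.isClosed_of
  intro n
  haveI : FiniteDimensional ℝ ↥(Submodule.span ℝ ((wv t2) '' (Iio n))) :=
    FiniteDimensional.span_of_finite ℝ ((Set.finite_Iio n).image _)
  refine ⟨_, (Submodule.span ℝ ((wv t2) '' (Iio n))).closed_of_finiteDimensional, ?_⟩
  ext s
  constructor
  · rintro ⟨hs, hSP⟩
    exact ⟨span_cap_SP t2 hs hSP, hSP⟩
  · rintro ⟨hs, hSP⟩
    exact ⟨Submodule.span_mono (image_subset_range _ _) hs, hSP⟩

/-- every linear map from the span of the `wv` to a tvs is continuous -/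
theorem continuous_linear_from_span {Z : Type*} [AddCommGroup Z] [Module ℝ Z]
    [TopologicalSpace Z] [IsTopologicalAddGroup Z] [ContinuousSMul ℝ Z]
    (β : ↥(Submodule.span ℝ (range (wv t2))) →ₗ[ℝ] Z) : Continuous β := by
  rw [continuous_iff_isClosed]
  intro C hC
  have himg : IsClosed ((Subtype.val : ↥(Submodule.span ℝ (range (wv t2))) → FV) '' (β ⁻¹' C)) := by
    apply komSP.isClosed_of
    intro n
    set Fn : Submodule ℝ FV := Submodule.span ℝ ((wv t2) '' (Iio n)) with hFn
    haveI : FiniteDimensional ℝ ↥Fn := FiniteDimensional.span_of_finite ℝ ((Set.finite_Iio n).image _)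
    have hFnle : Fn ≤ Submodule.span ℝ (range (wv t2)) := Submodule.span_mono (image_subset_range _ _)
    have hFnclosed : IsClosed (Fn : Set FV) := Fn.closed_of_finiteDimensional
    set βn : ↥Fn →ₗ[ℝ] Z := β.comp (Submodule.inclusion hFnle) with hβn
    have hβncont : Continuous βn := LinearMap.continuous_of_finiteDimensional (𝕜 := ℝ) (E := ↥Fn) βn
    refine ⟨(Subtype.val : ↥Fn → FV) '' (βn ⁻¹' C), ?_, ?_⟩
    · exact hFnclosed.isClosedEmbedding_subtypeVal.isClosedMap _
        (hC.preimage hβncont)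
    · ext s
      constructor
      · rintro ⟨⟨y, hy, rfl⟩, hSP⟩
        have hyFn : (y : FV) ∈ Fn := span_cap_SP t2 y.2 hSP
        refine ⟨⟨⟨(y : FV), hyFn⟩, ?_, rfl⟩, hSP⟩
        show βn _ ∈ C
        have hinc : Submodule.inclusion hFnle ⟨(y : FV), hyFn⟩ = y := Subtype.ext rfl
        rw [hβn, LinearMap.comp_apply, hinc]
        exact hy
      · rintro ⟨⟨y', hy', rfl⟩, hSP⟩
        refine ⟨⟨Submodule.inclusion hFnle y', hy', rfl⟩, hSP⟩
  have hval : β ⁻¹' C = (Subtype.val : ↥(Submodule.span ℝ (range (wv t2))) → FV) ⁻¹'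
      ((Subtype.val : ↥(Submodule.span ℝ (range (wv t2))) → FV) '' (β ⁻¹' C)) :=
    (preimage_image_eq _ Subtype.val_injective).symm
  rw [hval]
  exact himg.preimage continuous_subtype_val

end Span
end FVCore
end




noncomputable section

/-- an indiscrete copy of `ℝ` in an arbitrary universe -/
def Indisc : Type w := ULift.{w} ℝ

noncomputable instance : AddCommGroup (Indisc.{w}) := inferInstanceAs (AddCommGroup (ULift ℝ))
noncomputable instance : Module ℝ (Indisc.{w}) := inferInstanceAs (Module ℝ (ULift ℝ))
instance : TopologicalSpace (Indisc.{w}) := ⊤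
instance : IsTopologicalAddGroup (Indisc.{w}) :=
  { continuous_add := continuous_top, continuous_neg := continuous_top }
instance : ContinuousSMul ℝ (Indisc.{w}) := ⟨continuous_top⟩

def Indisc.mk : ℝ →ₗ[ℝ] Indisc.{w} where
  toFun := fun r => (ULift.up r : ULift ℝ)
  map_add' := fun _ _ => rfl
  map_smul' := fun _ _ => rfl

lemma Indisc.mk_inj : Function.Injective (Indisc.mk.{w}) := fun a b hab =>
  congrArg ULift.down hab

/-- The universal property forces the range of `i` to span. -/
theorem IsFreeTVS.span_range_top {X : Type u} [TopologicalSpace X] {V : Type v} [AddCommGroup V]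
    [Module ℝ V] [TopologicalSpace V] [IsTopologicalAddGroup V] [ContinuousSMul ℝ V] {i : X → V}
    (hV : IsFreeTVS.{u,v,w} V i) : Submodule.span ℝ (Set.range i) = ⊤ := by
  by_contra hne
  have hlt : Submodule.span ℝ (Set.range i) < ⊤ := lt_top_iff_ne_top.mpr hne
  haveI := Submodule.Quotient.nontrivial_iff.mpr hlt.ne
  set b := Module.Basis.ofVectorSpace ℝ (V ⧸ Submodule.span ℝ (Set.range i)) with hb
  obtain ⟨ix⟩ := b.index_nonempty
  set ℓ : V →ₗ[ℝ] ℝ := (b.coord ix).comp (Submodule.span ℝ (Set.range i)).mkQ with hℓ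
  obtain ⟨g, hg, hu⟩ := hV.2 (Indisc.{w}) (fun _ => 0) continuous_top
  have h1 : (0 : V →L[ℝ] Indisc.{w}) = g := hu 0 (fun x => rfl)
  set gl : V →L[ℝ] Indisc.{w} := ⟨Indisc.mk.comp ℓ, continuous_top⟩ with hgl
  have h2 : gl = g := by
    apply hu
    intro x
    have hker : ℓ (i x) = 0 := by
      rw [hℓ, LinearMap.comp_apply]
      have : (Submodule.span ℝ (Set.range i)).mkQ (i x) = 0 :=
        (Submodule.Quotient.mk_eq_zero _).mpr (Submodule.subset_span (mem_range_self x))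
      rw [this, map_zero]
    show Indisc.mk (ℓ (i x)) = 0
    rw [hker, map_zero]
  have h3 : gl = 0 := h2.trans h1.symm
  obtain ⟨z, hz⟩ := Submodule.mkQ_surjective _ (b ix)
  have hval : ℓ z = 1 := by
    rw [hℓ, LinearMap.comp_apply, hz]
    simp
  have h4 : gl z = 0 := by rw [h3]; rfl
  have h5 : Indisc.mk (ℓ z) = 0 := h4
  rw [hval] at h5
  have h6 : (1 : ℝ) = 0 := Indisc.mk_inj (by rw [h5, map_zero])
  exact one_ne_zero h6

/-- A free tvs over a Tychonoff space is Hausdorff. -/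
theorem IsFreeTVS.t2Space {X : Type u} [TopologicalSpace X] [T35Space X] {V : Type v}
    [AddCommGroup V] [Module ℝ V] [TopologicalSpace V] [IsTopologicalAddGroup V]
    [ContinuousSMul ℝ V] {i : X → V} (hV : IsFreeTVS.{u,v,w} V i) : T2Space V := by
  classical
  constructor
  intro p q hpq
  have hd : p - q ≠ 0 := sub_ne_zero.mpr hpq
  have hmem : p - q ∈ Submodule.span ℝ (Set.range i) := by
    rw [hV.span_range_top]; trivial
  obtain ⟨c, hc⟩ := Finsupp.mem_span_range_iff_exists_finsupp.mp hmem
  have hcne : c ≠ 0 := by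
    rintro rfl
    rw [Finsupp.sum_zero_index] at hc
    exact hd hc.symm
  obtain ⟨x₀, hx₀⟩ := Finsupp.support_nonempty_iff.mpr hcne
  -- separating continuous function
  have hclosed : IsClosed ((c.support.erase x₀ : Finset X) : Set X) :=
    (Finset.finite_toSet _).isClosed
  have hx₀notin : x₀ ∉ ((c.support.erase x₀ : Finset X) : Set X) := by simp
  obtain ⟨f, hfc, hf0, hf1⟩ :=
    CompletelyRegularSpace.completely_regular x₀ _ hclosed hx₀notin
  set f' : X → ℝ := fun ξ => 1 - ((f ξ : ℝ)) with hf'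
  have hf'c : Continuous f' := continuous_const.sub (continuous_subtype_val.comp hfc)
  have hf'x₀ : f' x₀ = 1 := by
    show 1 - ((f x₀ : ℝ)) = 1
    rw [hf0]
    norm_num
  have hf'K : ∀ ξ ∈ c.support.erase x₀, f' ξ = 0 := by
    intro ξ hξ
    have h9 : f ξ = 1 := hf1 (Finset.mem_coe.mpr hξ)
    show 1 - ((f ξ : ℝ)) = 0
    rw [h9]
    norm_num
  obtain ⟨g, hg, -⟩ := hV.2 (ULift.{w} ℝ) (fun ξ => ULift.up (f' ξ))
    (Continuous.comp continuous_uliftUp hf'c)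
  set ℓrl : V →ₗ[ℝ] ℝ :=
    ((ULift.moduleEquiv : ULift.{w} ℝ ≃ₗ[ℝ] ℝ).toLinearMap).comp
      (g : V →L[ℝ] ULift.{w} ℝ).toLinearMap with hℓrl
  have hℓrc : Continuous ℓrl := continuous_uliftDown.comp g.continuous
  have hib : ∀ b, ℓrl (i b) = f' b := by
    intro b
    show ((g (i b)).down) = f' b
    rw [hg b]
  have hval : ℓrl (p - q) = c x₀ := by
    rw [← hc, map_finsuppSum]
    rw [Finsupp.sum_eq_single x₀ (fun b hb hbne => by
        rw [map_smul, hib b, hf'K b (Finset.mem_erase.mpr ⟨hbne, Finsupp.mem_support_iff.mpr hb⟩), smul_zero])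
      (fun _ => by rw [zero_smul, map_zero])]
    rw [map_smul, hib x₀, hf'x₀, smul_eq_mul, mul_one]
  have hne : ℓrl p ≠ ℓrl q := by
    intro hcon
    have h8 : ℓrl (p - q) = 0 := by rw [map_sub, hcon, sub_self]
    rw [hval] at h8
    exact Finsupp.mem_support_iff.mp hx₀ h8
  exact separated_by_continuous hℓrc hne

end

noncomputable section

open FVCore

instance ULift.topologicalAddGroup' {M : Type*} [AddGroup M] [TopologicalSpace M]
    [IsTopologicalAddGroup M] : IsTopologicalAddGroup (ULift.{r} M) where
  continuous_add := continuous_uliftUp.comp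
    ((continuous_uliftDown.comp continuous_fst).add (continuous_uliftDown.comp continuous_snd))
  continuous_neg := continuous_uliftUp.comp continuous_uliftDown.neg

instance ULift.continuousSMul' {R M : Type*} [SMul R M] [TopologicalSpace R] [TopologicalSpace M]
    [ContinuousSMul R M] : ContinuousSMul R (ULift.{r} M) where
  continuous_smul := continuous_uliftUp.comp
    (continuous_fst.smul (continuous_uliftDown.comp continuous_snd))


set_option synthInstance.maxHeartbeats 1000000 in
set_option maxHeartbeats 2000000 in
/-- If `X` is an infinite Tychonoff space, `(V, iX)` is the free topological
vector space over `X` and `(W, iN)` is the free topological vector space over the countably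
infinite discrete space `ℕ`, then `V` contains a closed vector subspace which is topologically
isomorphic (as a topological vector space) to `W = V(ℕ)`. -/
theorem freeTVS_contains_closed_copy_of_freeTVS_nat
    {X : Type u} [TopologicalSpace X] [T35Space X] [Infinite X]
    (V : Type v) [AddCommGroup V] [Module ℝ V] [TopologicalSpace V]
    [IsTopologicalAddGroup V] [ContinuousSMul ℝ V] (iX : X → V)
    (hV : IsFreeTVS V iX)
    (W : Type v) [AddCommGroup W] [Module ℝ W] [TopologicalSpace W]
    [IsTopologicalAddGroup W] [ContinuousSMul ℝ W] (iN : ℕ → W)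
    (hW : IsFreeTVS W iN) :
    ∃ S : Submodule ℝ V, IsClosed (S : Set V) ∧ Nonempty (W ≃L[ℝ] S) := by
  classical
  haveI hT2V : T2Space V := hV.t2Space
  -- an injective sequence and separating coordinate functions
  set x : ℕ ↪ X := Infinite.natEmbedding X with hx
  have hsep : ∀ n : ℕ, ∃ f : X → unitInterval, Continuous f ∧ f (x (n+1)) = 0 ∧
      ∀ j ≤ n, f (x j) = 1 := by
    intro n
    have hclosed : IsClosed ((Finset.image x (Finset.range (n+1)) : Finset X) : Set X) :=
      (Finset.finite_toSet _).isClosed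
    have hnotin : x (n+1) ∉ ((Finset.image x (Finset.range (n+1)) : Finset X) : Set X) := by
      intro hmem
      rw [Finset.mem_coe, Finset.mem_image] at hmem
      obtain ⟨m, hm, hme⟩ := hmem
      rw [Finset.mem_range] at hm
      have := x.injective hme
      omega
    obtain ⟨f, hfc, hf0, hf1⟩ :=
      CompletelyRegularSpace.completely_regular (x (n+1)) _ hclosed hnotin
    refine ⟨f, hfc, hf0, fun j hj => hf1 ?_⟩
    rw [Finset.mem_coe, Finset.mem_image]
    exact ⟨j, Finset.mem_range.mpr (by omega), rfl⟩
  choose F hFc hF0 hF1 using hsep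
  set g : X → Kc := fun ξ n => F n ξ with hg
  have hgc : Continuous g := continuous_pi fun n => hFc n
  have hginj : Function.Injective (fun m => g (x m)) := by
    have key : ∀ a b : ℕ, a < b → g (x a) ≠ g (x b) := by
      intro a b hlt hcon
      have hb1 : b - 1 + 1 = b := by omega
      have h1 : g (x b) (b-1) = 0 := by
        show F (b-1) (x b) = 0
        conv_lhs => rw [← hb1]
        exact hF0 (b-1)
      have h2 : g (x a) (b-1) = 1 := hF1 (b-1) a (by omega)
      rw [hcon, h1] at h2
      have : (0:ℝ) = 1 := congrArg Subtype.val h2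
      norm_num at this
    intro a b hab
    by_contra hne
    rcases Nat.lt_or_ge a b with h | h
    · exact key a b h hab
    · exact key b a (by omega) hab.symm
  set pe : ℕ × ℕ ≃ ℕ := Nat.pairEquiv with hpe
  set t2e : ℕ × ℕ ↪ Kc := ⟨fun p => g (x (pe p)), fun p q hpq => pe.injective (hginj hpq)⟩
    with ht2e
  -- the span inside FV and its basis
  set B : Module.Basis ℕ ℝ ↥(Submodule.span ℝ (Set.range (wv t2e))) := Module.Basis.span (linIndep_wv t2e)
    with hB
  -- the extension G : V → FV
  obtain ⟨Gc, hGc, -⟩ := hV.2 (ULift FV) (fun ξ => ULift.up (Finsupp.single (g ξ) (1:ℝ)))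
    (continuous_uliftUp.comp (continuous_single_one.comp hgc))
  set Glin : V →ₗ[ℝ] FV := ((ULift.moduleEquiv : ULift FV ≃ₗ[ℝ] FV).toLinearMap).comp
    Gc.toLinearMap with hGlin
  have hGlinc : Continuous Glin := continuous_uliftDown.comp Gc.continuous
  have hGlini : ∀ ξ, Glin (iX ξ) = Finsupp.single (g ξ) (1:ℝ) := fun ξ => by
    show (Gc (iX ξ)).down = _
    rw [hGc ξ]
  -- the vectors in V mapping onto the wv
  set vV : ℕ → V := fun k => ∑ i : Fin (k+1), iX (x (pe (k, (i:ℕ)))) with hvV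
  have hGvV : ∀ k, Glin (vV k) = wv t2e k := by
    intro k
    rw [hvV, map_sum, wv]
    apply Finset.sum_congr rfl
    intro i _
    rw [hGlini]
    rfl
  set j : ↥(Submodule.span ℝ (Set.range (wv t2e))) →ₗ[ℝ] V := B.constr ℝ vV with hj
  have hjB : Glin.comp j = (Submodule.span ℝ (Set.range (wv t2e))).subtype := by
    apply Module.Basis.ext B
    intro k
    rw [LinearMap.comp_apply, hj, Module.Basis.constr_basis, Submodule.subtype_apply, hB,
      Module.Basis.span_apply, hGvV]
  have hjGlin : ∀ s, Glin (j s) = (s : FV) := fun s => LinearMap.congr_fun hjB s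
  have jcont : Continuous j := continuous_linear_from_span t2e j
  -- the isomorphism W ≃ S'
  haveI : IsTopologicalAddGroup (ULift ↥(Submodule.span ℝ (Set.range (wv t2e)))) :=
    ULift.topologicalAddGroup'
  haveI : ContinuousSMul ℝ (ULift ↥(Submodule.span ℝ (Set.range (wv t2e)))) :=
    ULift.continuousSMul'
  obtain ⟨ac, hac, -⟩ := hW.2 (ULift ↥(Submodule.span ℝ (Set.range (wv t2e))))
    (fun n => ULift.up (B n)) continuous_of_discreteTopology
  set αL : W →ₗ[ℝ] ↥(Submodule.span ℝ (Set.range (wv t2e))) :=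
    ((ULift.moduleEquiv : ULift ↥(Submodule.span ℝ (Set.range (wv t2e))) ≃ₗ[ℝ] _).toLinearMap).comp
      ac.toLinearMap with hαL
  have hαc : Continuous αL := continuous_uliftDown.comp ac.continuous
  have hαi : ∀ n, αL (iN n) = B n := fun n => by
    show (ac (iN n)).down = _
    rw [hac n]
  set β : ↥(Submodule.span ℝ (Set.range (wv t2e))) →ₗ[ℝ] W := B.constr ℝ iN with hβ
  have βcont : Continuous β := continuous_linear_from_span t2e β
  have hαβ : αL.comp β = LinearMap.id := by
    apply Module.Basis.ext B
    intro k
    rw [LinearMap.comp_apply, hβ, Module.Basis.constr_basis, hαi, LinearMap.id_apply]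
  have hβα : β.comp αL = LinearMap.id := by
    apply LinearMap.ext_on hW.span_range_top
    rintro z ⟨n, rfl⟩
    rw [LinearMap.comp_apply, hαi n, hβ, Module.Basis.constr_basis, LinearMap.id_apply]
  -- the closed submodule of V
  set Sfin : Submodule ℝ V := LinearMap.range j with hSfin
  have hS'cl : IsClosed ((Submodule.span ℝ (Set.range (wv t2e)) : Submodule ℝ FV) : Set FV) :=
    isClosed_span_wv t2e
  have hA : IsClosed (Glin ⁻¹' ((Submodule.span ℝ (Set.range (wv t2e)) : Submodule ℝ FV) : Set FV)) :=
    hS'cl.preimage hGlinc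
  have hrcont : Continuous (fun a :
      ↥(Glin ⁻¹' ((Submodule.span ℝ (Set.range (wv t2e)) : Submodule ℝ FV) : Set FV)) =>
      j ⟨Glin (a : V), a.2⟩) :=
    jcont.comp ((hGlinc.comp continuous_subtype_val).subtype_mk _)
  have hclosedSfin : IsClosed (Sfin : Set V) := by
    have hE : IsClosed {a :
        ↥(Glin ⁻¹' ((Submodule.span ℝ (Set.range (wv t2e)) : Submodule ℝ FV) : Set FV)) |
        j ⟨Glin (a : V), a.2⟩ = (a : V)} := isClosed_eq hrcont continuous_subtype_val
    have himg := (Topology.IsClosedEmbedding.subtypeVal hA).isClosedMap _ hE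
    have heq : (Sfin : Set V) = Subtype.val '' {a :
        ↥(Glin ⁻¹' ((Submodule.span ℝ (Set.range (wv t2e)) : Submodule ℝ FV) : Set FV)) |
        j ⟨Glin (a : V), a.2⟩ = (a : V)} := by
      ext z
      constructor
      · rintro ⟨s, rfl⟩
        have hz : Glin (j s) ∈ (Submodule.span ℝ (Set.range (wv t2e)) : Submodule ℝ FV) := by
          rw [hjGlin s]
          exact s.2
        refine ⟨⟨j s, hz⟩, ?_, rfl⟩
        show j ⟨Glin (j s), hz⟩ = j s
        congr 1
        exact Subtype.ext (hjGlin s)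
      · rintro ⟨a, ha, rfl⟩
        exact ⟨⟨Glin (a : V), a.2⟩, ha⟩
    rw [heq]
    exact himg
  refine ⟨Sfin, hclosedSfin, ⟨?_⟩⟩
  -- W ≃L S' ≃L Sfin
  have e1 : W ≃L[ℝ] ↥(Submodule.span ℝ (Set.range (wv t2e))) :=
    { LinearEquiv.ofLinear (re₁₂ := RingHomInvPair.ids) (re₂₁ := RingHomInvPair.ids) αL β hαβ hβα with
      continuous_toFun := hαc
      continuous_invFun := βcont }
  have hmemS : ∀ z : ↥Sfin, Glin (z : V) ∈ Submodule.span ℝ (Set.range (wv t2e)) := by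
    rintro ⟨z, s, rfl⟩
    rw [hjGlin s]
    exact s.2
  have e2 : ↥(Submodule.span ℝ (Set.range (wv t2e))) ≃L[ℝ] ↥Sfin := by
    refine
      { LinearEquiv.ofLinear (re₁₂ := RingHomInvPair.ids) (re₂₁ := RingHomInvPair.ids) j.rangeRestrict ((Glin.comp Sfin.subtype).codRestrict _ hmemS) ?_ ?_ with
        continuous_toFun := ?_
        continuous_invFun := ?_ }
    · -- rangeRestrict ∘ codRestrict = id on Sfin
      apply LinearMap.ext
      rintro ⟨z, s, rfl⟩
      apply Subtype.ext
      show j ((Glin.comp Sfin.subtype).codRestrict _ hmemS ⟨j s, ⟨s, rfl⟩⟩ : _) = j s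
      congr 1
      apply Subtype.ext
      show Glin (j s) = (s : FV)
      exact hjGlin s
    · -- codRestrict ∘ rangeRestrict = id on S'
      apply LinearMap.ext
      intro s
      apply Subtype.ext
      show Glin (j s) = (s : FV)
      exact hjGlin s
    · exact jcont.subtype_mk _
    · exact (hGlinc.comp continuous_subtype_val).subtype_mk _
  exact e1.trans e2

end
end

section
/- Let X be a Tychonoff space whose free topological vector space V(X) is a locally convex topological vector space. Then X contains no infinite compact subsets, i.e., every compact subset of X is finite. -/
open Topology Set

universe u v w

/-!
Suppose `K ⊆ X` is infinite. Choose points `xₙ ∈ K` with pairwise disjoint open neighbourhoods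
and Urysohn bumps `φₙ` supported in them. The map `z ↦ ∑ₙ φₙ(z)/(n+1) • eₙ` into the finitely
supported sequences with the F-norm `‖c‖ = ∑ₖ √|cₖ|` is continuous: at each point at most one bump
is nonzero, so the tails of the series are uniformly small. That space is not locally convex: the
points `eₙ/(n+1)` tend to `0`, yet their barycentres with weights `1/(n+1)` have norm `√Hₙ`
(harmonic numbers). So the linear extension `V(X) → E` maps the convex hull of `i(K)` onto an
unbounded set, whereas in a locally convex `V(X)` the convex hull of the compact set `i(K)` is
bounded, hence so is its image.
-/

open Filter

instance {G : Type*} [TopologicalSpace G] [AddGroup G] [IsTopologicalAddGroup G] :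
    IsTopologicalAddGroup (ULift.{w} G) where

instance {R M : Type*} [TopologicalSpace R] [TopologicalSpace M] [SMul R M] [ContinuousSMul R M] :
    ContinuousSMul R (ULift.{w} M) :=
  ⟨continuous_uliftUp.comp (continuous_fst.smul (continuous_uliftDown.comp continuous_snd))⟩

theorem IsFreeTVS.exists_extend {X : Type u} [TopologicalSpace X] {V : Type v} [AddCommGroup V]
    [Module ℝ V] [TopologicalSpace V] [IsTopologicalAddGroup V] [ContinuousSMul ℝ V] {i : X → V}
    (hV : IsFreeTVS.{u, v, w} V i) {E : Type} [AddCommGroup E] [Module ℝ E] [TopologicalSpace E]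
    [IsTopologicalAddGroup E] [ContinuousSMul ℝ E] {f : X → E} (hf : Continuous f) :
    ∃ g : V →L[ℝ] E, ∀ x, g (i x) = f x := by
  obtain ⟨g, hg, -⟩ := hV.2 (ULift.{w} E) (fun x => ULift.up (f x)) (continuous_uliftUp.comp hf)
  exact ⟨(ContinuousLinearEquiv.ulift : ULift.{w} E ≃L[ℝ] E).toContinuousLinearMap.comp g,
    fun x => congrArg ULift.down (hg x)⟩

theorem Bornology.IsVonNBounded.convexHull {E : Type*} [AddCommGroup E] [Module ℝ E]
    [TopologicalSpace E] [LocallyConvexSpace ℝ E] {s : Set E}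
    (hs : Bornology.IsVonNBounded ℝ s) : Bornology.IsVonNBounded ℝ (convexHull ℝ s) := by
  intro W hW
  obtain ⟨W', ⟨hW'0, hW'c⟩, hW'W⟩ := (LocallyConvexSpace.convex_basis_zero ℝ E).mem_iff.1 hW
  exact (hs hW'0).eventually.mono fun a ha =>
    (convexHull_min ha (hW'c.smul a)).trans (Set.smul_set_mono hW'W)

section Separation

open Function

variable {X : Type*} [TopologicalSpace X] [T25Space X] {S : Set X}

theorem Set.Infinite.exists_isOpen_diff_closure_infinite (hS : S.Infinite) :
    ∃ x ∈ S, ∃ U : Set X, IsOpen U ∧ x ∈ U ∧ (S \ closure U).Infinite := by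
  obtain ⟨a, ha, b, hb, hab⟩ := hS.nontrivial
  obtain ⟨A, haA, hA, B, hbB, hB, hAB⟩ := exists_open_nhds_disjoint_closure hab
  have hcover : S ⊆ (S \ closure A) ∪ (S \ closure B) := fun z hz =>
    (not_and_or.1 fun h => hAB.ne_of_mem h.1 h.2 rfl).imp (⟨hz, ·⟩) (⟨hz, ·⟩)
  rcases Set.infinite_union.1 (hS.mono hcover) with h | h
  · exact ⟨a, ha, A, hA, haA, h⟩
  · exact ⟨b, hb, B, hB, hbB, h⟩

theorem Set.Infinite.exists_seq_pairwise_disjoint_isOpen (hS : S.Infinite) :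
    ∃ (x : ℕ → X) (U : ℕ → Set X), (∀ n, x n ∈ S) ∧ (∀ n, IsOpen (U n)) ∧ (∀ n, x n ∈ U n) ∧
      Pairwise (Disjoint on U) := by
  have : Nonempty X := ⟨hS.nonempty.some⟩
  choose! p hpT W hW hpW hinf using
    fun T : Set X => @Set.Infinite.exists_isOpen_diff_closure_infinite X _ _ T
  let T : ℕ → Set X := fun n => (fun T => T \ closure (W T))^[n] S
  have hT_succ : ∀ n, T (n + 1) = T n \ closure (W (T n)) := fun n =>
    iterate_succ_apply' _ n S
  have hT_inf : ∀ n, (T n).Infinite := fun n => by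
    induction n with
    | zero => exact hS
    | succ n ih => rw [hT_succ]; exact hinf _ ih
  have hT_anti : Antitone T := antitone_nat_of_succ_le fun n => by rw [hT_succ]; exact sdiff_subset
  refine ⟨fun n => p (T n), fun n => W (T n) ∩ ⋂ m ∈ Finset.range n, (closure (W (T m)))ᶜ,
    fun n => hT_anti (Nat.zero_le n) (hpT _ (hT_inf n)), fun n => ?_, fun n => ?_, ?_⟩
  · exact (hW _ (hT_inf n)).inter (isOpen_biInter_finset fun m _ => isClosed_closure.isOpen_compl)
  · refine ⟨hpW _ (hT_inf n), mem_iInter₂.2 fun m hm => ?_⟩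
    have := hT_anti (Finset.mem_range.1 hm : m + 1 ≤ n) (hpT _ (hT_inf n))
    rw [hT_succ] at this
    exact this.2
  · refine (pairwise_disjoint_on _).2 fun m n hmn => Set.disjoint_left.2 fun z hzm hzn => ?_
    exact mem_iInter₂.1 hzn.2 m (Finset.mem_range.2 hmn) (subset_closure hzm.1)

end Separation

theorem Set.Infinite.exists_seq_bump {X : Type*} [TopologicalSpace X] [T35Space X] {S : Set X}
    (hS : S.Infinite) :
    ∃ (x : ℕ → X) (φ : ℕ → X → ℝ), (∀ n, x n ∈ S) ∧ (∀ n, Continuous (φ n)) ∧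
      (∀ n z, φ n z ∈ Icc 0 1) ∧ (∀ n, φ n (x n) = 1) ∧ ∀ z, {n | φ n z ≠ 0}.Subsingleton := by
  obtain ⟨x, U, hxS, hU, hxU, hdisj⟩ := hS.exists_seq_pairwise_disjoint_isOpen
  choose f hf hfx hfU using fun n =>
    CompletelyRegularSpace.completely_regular_isOpen (x n) (U n) (hU n) (hxU n)
  have hφU : ∀ n z, 1 - (f n z : ℝ) ≠ 0 → z ∈ U n := fun n z hz => by
    by_contra h
    simp [hfU n h] at hz
  refine ⟨x, fun n z => 1 - f n z, hxS, fun n => continuous_const.sub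
    (continuous_subtype_val.comp (hf n)), fun n z => ⟨by simp [(f n z).2.2], by simp [(f n z).2.1]⟩,
    fun n => by simp [hfx n], fun z m hm n hn => ?_⟩
  by_contra hmn
  exact (hdisj hmn).ne_of_mem (hφU m z hm) (hφU n z hn) rfl

theorem Real.sqrt_add_le_sqrt_add_sqrt {a b : ℝ} (ha : 0 ≤ a) (hb : 0 ≤ b) :
    √(a + b) ≤ √a + √b :=
  Real.sqrt_le_iff.2 ⟨by positivity, by
    nlinarith [Real.sq_sqrt ha, Real.sq_sqrt hb, Real.sqrt_nonneg a, Real.sqrt_nonneg b]⟩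

theorem Real.sqrt_abs_add_le (a b : ℝ) : √|a + b| ≤ √|a| + √|b| :=
  (Real.sqrt_le_sqrt (abs_add_le a b)).trans
    (Real.sqrt_add_le_sqrt_add_sqrt (abs_nonneg a) (abs_nonneg b))

noncomputable def Finsupp.sqrtNorm {ι : Type*} : AddGroupSeminorm (ι →₀ ℝ) where
  toFun c := c.sum fun _ t => √|t|
  map_zero' := Finsupp.sum_zero_index
  add_le' c d := by
    classical
    have hsum := fun (e : ι →₀ ℝ) (he : e.support ⊆ c.support ∪ d.support) =>
      Finsupp.sum_of_support_subset e he (fun _ t => √|t|) (by simp)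
    rw [hsum _ Finsupp.support_add, hsum c Finset.subset_union_left,
      hsum d Finset.subset_union_right, ← Finset.sum_add_distrib]
    exact Finset.sum_le_sum fun k _ => Real.sqrt_abs_add_le (c k) (d k)
  neg' c := by simp [Finsupp.sum_neg_index]

noncomputable abbrev Finsupp.sqrtNormedAddCommGroup {ι : Type*} :
    SeminormedAddCommGroup (ι →₀ ℝ) :=
  Finsupp.sqrtNorm.toSeminormedAddCommGroup

attribute [local instance] Finsupp.sqrtNormedAddCommGroup

namespace Finsupp

variable {ι : Type*}

theorem norm_eq_sum_sqrt_abs {c : ι →₀ ℝ} {s : Finset ι} (h : c.support ⊆ s) :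
    ‖c‖ = ∑ k ∈ s, √|c k| :=
  sum_of_support_subset c h (fun _ t => √|t|) fun _ _ => by simp

theorem norm_smul_eq_sqrt_abs_mul (t : ℝ) (c : ι →₀ ℝ) : ‖t • c‖ = √|t| * ‖c‖ := by
  rw [norm_eq_sum_sqrt_abs support_smul, norm_eq_sum_sqrt_abs subset_rfl, Finset.mul_sum]
  simp [abs_mul, Real.sqrt_mul (abs_nonneg t)]

theorem continuousSMul_sqrtNorm : ContinuousSMul ℝ (ι →₀ ℝ) := by
  have hcont : Continuous fun p : ℝ × (ι →₀ ℝ) => √|p.1| * ‖p.2‖ := by fun_prop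
  refine .of_nhds_zero ?_ (fun c => ?_) (fun t => ?_) <;>
    rw [tendsto_zero_iff_norm_tendsto_zero] <;> simp only [norm_smul_eq_sqrt_abs_mul]
  · simpa [nhds_prod_eq] using hcont.tendsto (0, 0)
  · simpa using (by fun_prop : Continuous fun t : ℝ => √|t| * ‖c‖).tendsto 0
  · simpa using (by fun_prop : Continuous fun c : ι →₀ ℝ => √|t| * ‖c‖).tendsto 0

end Finsupp

attribute [local instance] Finsupp.continuousSMul_sqrtNorm

namespace Finsupp

variable {ι : Type*}

theorem exists_norm_le_of_isVonNBounded {s : Set (ι →₀ ℝ)} (hs : Bornology.IsVonNBounded ℝ s) :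
    ∃ C, ∀ c ∈ s, ‖c‖ ≤ C := by
  obtain ⟨r, hr, hrs⟩ := (hs (Metric.ball_mem_nhds 0 one_pos)).exists_pos
  refine ⟨√r, fun c hc => ?_⟩
  obtain ⟨b, hb, rfl⟩ := hrs r (by simp [abs_of_pos hr]) hc
  rw [norm_smul_eq_sqrt_abs_mul, abs_of_pos hr]
  exact mul_le_of_le_one_right (Real.sqrt_nonneg r) (mem_ball_zero_iff.1 hb).le

theorem norm_sum_single (s : Finset ι) (b : ι → ℝ) :
    ‖∑ k ∈ s, single k (b k)‖ = ∑ k ∈ s, √|b k| := by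
  classical
  have hsupp : (∑ k ∈ s, single k (b k)).support ⊆ s := fun k hk => by
    obtain ⟨j, hj, hk⟩ := Finset.mem_biUnion.1 (support_finsetSum hk)
    rwa [Finset.mem_singleton.1 (support_single_subset hk)]
  rw [norm_eq_sum_sqrt_abs hsupp]
  refine Finset.sum_congr rfl fun k hk => ?_
  simp [Finset.sum_apply', single_apply, hk]

theorem norm_centerMass_single {s : Finset ι} {a : ι → ℝ} (ha : ∀ k ∈ s, 0 ≤ a k)
    (hs : 0 < ∑ k ∈ s, a k) :
    ‖s.centerMass a (fun k => single k (a k))‖ = √(∑ k ∈ s, a k) := by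
  have hsq : ∑ k ∈ s, a k • single k (a k) = ∑ k ∈ s, single k (a k ^ 2) :=
    Finset.sum_congr rfl fun k _ => by rw [smul_single, smul_eq_mul, sq]
  have hroot : ∑ k ∈ s, √|a k ^ 2| = ∑ k ∈ s, a k :=
    Finset.sum_congr rfl fun k hk => by rw [abs_sq, Real.sqrt_sq (ha k hk)]
  rw [Finset.centerMass, hsq, norm_smul_eq_sqrt_abs_mul, norm_sum_single, hroot,
    abs_of_pos (inv_pos.2 hs), Real.sqrt_inv]
  field_simp
  rw [Real.sq_sqrt hs.le]

theorem norm_lt_of_subsingleton_support {c : ι →₀ ℝ} {ε : ℝ} (hε : 0 < ε)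
    (hc : (c.support : Set ι).Subsingleton) (h : ∀ k ∈ c.support, √|c k| < ε) : ‖c‖ < ε := by
  rcases hc.eq_empty_or_singleton with h0 | ⟨j, hj⟩
  · rw [norm_eq_sum_sqrt_abs (s := ∅) (by simpa using h0)]
    simpa using hε
  · have hj' : c.support = {j} := by exact_mod_cast hj
    rw [norm_eq_sum_sqrt_abs hj'.subset, Finset.sum_singleton]
    exact h j (by simp [hj'])

theorem continuous_single (k : ι) : Continuous (single k : ℝ → ι →₀ ℝ) :=
  (continuous_id.smul (continuous_const (y := single k (1 : ℝ)))).congr fun t => smul_single_one k t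

theorem exists_continuous_of_subsingleton_support {X : Type*} [TopologicalSpace X]
    {g : ℕ → X → ℝ} (hg : ∀ n, Continuous (g n)) (hdisj : ∀ z, {n | g n z ≠ 0}.Subsingleton)
    {a : ℕ → ℝ} (ha : Tendsto a atTop (𝓝 0)) (hga : ∀ n z, |g n z| ≤ a n) :
    ∃ f : X → ℕ →₀ ℝ, Continuous f ∧ ∀ z n, f z n = g n z := by
  let f z : ℕ →₀ ℝ := ofSupportFinite (fun n => g n z) (hdisj z).finite
  let F N z : ℕ →₀ ℝ := ∑ n ∈ Finset.range N, single n (g n z)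
  have hF : ∀ N, Continuous (F N) := fun N =>
    continuous_finsetSum _ fun n _ => (continuous_single n).comp (hg n)
  have hf : ∀ z n, f z n = g n z := fun _ _ => rfl
  have htail : ∀ N z k, (f z - F N z) k = if k < N then 0 else g k z := fun N z k => by
    by_cases hk : k < N <;> simp [F, hf, single_apply, hk]
  refine ⟨f, (Metric.tendstoUniformly_iff.2 fun ε hε => ?_).continuous
    (Filter.Frequently.of_forall (f := atTop) hF), hf⟩
  obtain ⟨N₀, hN₀⟩ := eventually_atTop.1 (ha.eventually (gt_mem_nhds (pow_pos hε 2)))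
  filter_upwards [eventually_ge_atTop N₀] with N hN z
  rw [dist_eq_norm]
  have htail_supp : ∀ k ∈ (f z - F N z).support, N ≤ k ∧ (f z - F N z) k = g k z := by
    intro k hk
    have hk := mem_support_iff.1 hk
    rw [htail] at hk ⊢
    split_ifs at hk ⊢ with hkN
    · exact absurd rfl hk
    · exact ⟨not_lt.1 hkN, rfl⟩
  refine norm_lt_of_subsingleton_support hε ((hdisj z).anti fun k hk => ?_) fun k hk => ?_
  · exact ((htail_supp k hk).2 ▸ mem_support_iff.1 hk : g k z ≠ 0)
  · rw [(htail_supp k hk).2]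
    exact (Real.sqrt_lt' hε).2 ((hga k z).trans_lt (hN₀ k (hN.trans (htail_supp k hk).1)))

theorem not_isVonNBounded_convexHull_range_single :
    ¬ Bornology.IsVonNBounded ℝ (convexHull ℝ (range fun n : ℕ => single n (1 / (n + 1 : ℝ)))) := by
  intro h
  obtain ⟨C, hC⟩ := exists_norm_le_of_isVonNBounded h
  obtain ⟨n, hn⟩ :=
    (Real.tendsto_sum_range_one_div_nat_succ_atTop.eventually_gt_atTop (max C 0 ^ 2)).exists
  have hpos : 0 < ∑ k ∈ Finset.range n, 1 / (k + 1 : ℝ) :=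
    (by positivity : (0 : ℝ) ≤ max C 0 ^ 2).trans_lt hn
  have hmem := Finset.centerMass_mem_convexHull (Finset.range n) (fun k _ => by positivity) hpos
    (z := fun k : ℕ => single k (1 / (k + 1 : ℝ))) fun k _ => mem_range_self k
  have hle := hC _ hmem
  rw [norm_centerMass_single (fun k _ => by positivity) hpos] at hle
  exact ((Real.lt_sqrt (le_max_right C 0)).2 hn).not_ge (hle.trans (le_max_left C 0))

end Finsupp

theorem Set.Infinite.exists_seq_continuous_finsupp {X : Type*} [TopologicalSpace X] [T35Space X]
    {S : Set X} (hS : S.Infinite) :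
    ∃ (x : ℕ → X) (f : X → ℕ →₀ ℝ), (∀ n, x n ∈ S) ∧ Continuous f ∧
      ∀ n, f (x n) = Finsupp.single n (1 / (n + 1 : ℝ)) := by
  obtain ⟨x, φ, hxS, hφ, hφ01, hφx, hφdisj⟩ := hS.exists_seq_bump
  obtain ⟨f, hf, hfφ⟩ := Finsupp.exists_continuous_of_subsingleton_support
    (g := fun n z => 1 / (n + 1 : ℝ) * φ n z) (fun n => continuous_const.mul (hφ n))
    (fun z m hm n hn => hφdisj z (right_ne_zero_of_mul hm) (right_ne_zero_of_mul hn))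
    tendsto_one_div_add_atTop_nhds_zero_nat fun n z => by
      rw [abs_mul, abs_of_nonneg (hφ01 n z).1, abs_of_pos (by positivity)]
      exact mul_le_of_le_one_right (by positivity) (hφ01 n z).2
  refine ⟨x, f, hxS, hf, fun k => Finsupp.ext fun n => ?_⟩
  have hφxk : φ n (x k) = if k = n then 1 else 0 := by
    split_ifs with hkn
    · exact hkn ▸ hφx k
    · by_contra hne
      exact hkn (hφdisj (x k) (by simp [hφx k]) hne)
  rw [hfφ, hφxk, Finsupp.single_apply]
  split_ifs <;> simp [*]

/-- If `X` is a Tychonoff space whose free topological vector space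
`(V, i)` is locally convex, then every compact subset of `X` is finite. -/
theorem finite_compact_of_locallyConvex_freeTVS
    {X : Type u} [TopologicalSpace X] [T35Space X]
    (V : Type v) [AddCommGroup V] [Module ℝ V] [TopologicalSpace V]
    [IsTopologicalAddGroup V] [ContinuousSMul ℝ V] (i : X → V)
    (hV : IsFreeTVS V i) (hlc : LocallyConvexSpace ℝ V) :
    ∀ K : Set X, IsCompact K → K.Finite := by
  intro K hK
  by_contra hinf
  obtain ⟨x, f, hxK, hf, hfx⟩ := Set.Infinite.exists_seq_continuous_finsupp hinf
  obtain ⟨G, hG⟩ := hV.exists_extend hf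
  have hbdd : Bornology.IsVonNBounded ℝ (G '' convexHull ℝ (i '' K)) :=
    ((hK.image hV.1).isVonNBounded ℝ).convexHull.image G
  have hsub : range (fun n : ℕ => Finsupp.single n (1 / (n + 1 : ℝ))) ⊆ G '' (i '' K) :=
    range_subset_iff.2 fun k => ⟨i (x k), mem_image_of_mem i (hxK k), (hG _).trans (hfx k)⟩
  exact Finsupp.not_isVonNBounded_convexHull_range_single <| hbdd.subset <|
    (convexHull_mono hsub).trans (G.toLinearMap.image_convexHull _).superset
end

section
/- Let X be a Tychonoff space. Then the free locally convex space L(X) is a Baire space if and only if X is finite. -/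
open Topology Set

universe u v w

/-- `IsFreeLCS V i` says that the (real) locally convex space `V` together with the continuous
map `i : X → V` is the free locally convex space over `X`: every continuous map from `X` to a
locally convex space `E` extends uniquely to a continuous linear operator `V →L[ℝ] E`. -/
def IsFreeLCS {X : Type u} [TopologicalSpace X] (V : Type v) [AddCommGroup V] [Module ℝ V]
    [TopologicalSpace V] [IsTopologicalAddGroup V] [ContinuousSMul ℝ V]
    [LocallyConvexSpace ℝ V] (i : X → V) : Prop :=
  Continuous i ∧
    ∀ (E : Type w) [AddCommGroup E] [Module ℝ E] [TopologicalSpace E]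
      [IsTopologicalAddGroup E] [ContinuousSMul ℝ E] [LocallyConvexSpace ℝ E] (f : X → E),
      Continuous f → ∃! g : V →L[ℝ] E, ∀ x, g (i x) = f x

/-!
If `X` is finite, `i(X)` is a finite basis of `V`, and the continuous extensions of the bounded
continuous functions on `X` separate the points of `V`; so `V` is a Hausdorff finite-dimensional
space, homeomorphic to some `ℝⁿ`.

If `X` is infinite, pair `V` with `X →ᵇ ℝ`: this maps `V` continuously into the product
`(X →ᵇ ℝ) → ℝ`, sending `i x` to evaluation at `x`. The combinations `∑_{j<m} c_j χ_j` with
`|c_j| ≤ r` and `χ_j` multiplicative functionals bounded by the sup norm form a compact set,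
and by Dedekind's independence of characters its preimage consists of vectors whose expansion
in the basis `i(X)` has at most `m` terms. These countably many closed sets cover `V`, yet none
has interior: near any vector there are vectors differing from it by `2m + 1` basis terms.
-/

open BoundedContinuousFunction Finsupp

/-- `ℝ` with the indiscrete topology: every linear functional into it is continuous, so the
uniqueness clause of the universal property forces `range i` to span. -/
def IndiscreteReal : Type w := ULift ℝ

namespace IndiscreteReal

noncomputable instance : AddCommGroup IndiscreteReal.{w} :=
  inferInstanceAs (AddCommGroup (ULift ℝ))

noncomputable instance : Module ℝ IndiscreteReal.{w} := inferInstanceAs (Module ℝ (ULift ℝ))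

instance : TopologicalSpace IndiscreteReal.{w} := ⊤

instance : IsTopologicalAddGroup IndiscreteReal.{w} where
  continuous_add := continuous_top
  continuous_neg := continuous_top

instance : ContinuousSMul ℝ IndiscreteReal.{w} := ⟨continuous_top⟩

instance : LocallyConvexSpace ℝ IndiscreteReal.{w} := by
  refine (locallyConvexSpace_iff_exists_convex_subset_zero _ _).2 fun U hU => ?_
  rw [show 𝓝 (0 : IndiscreteReal.{w}) = ⊤ from nhds_top, Filter.mem_top] at hU
  exact ⟨univ, Filter.univ_mem, convex_univ, hU.ge⟩

noncomputable def ofLinearMap {V : Type*} [AddCommGroup V] [Module ℝ V] [TopologicalSpace V]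
    (ρ : V →ₗ[ℝ] ℝ) : V →L[ℝ] IndiscreteReal.{w} :=
  ⟨(ULift.moduleEquiv.symm : ℝ ≃ₗ[ℝ] ULift ℝ).toLinearMap ∘ₗ ρ, continuous_top⟩

end IndiscreteReal

namespace BoundedContinuousFunction

variable {X : Type u} [TopologicalSpace X]

def evalMonoidHom (x : X) : (X →ᵇ ℝ) →* ℝ where
  toFun g := g x
  map_one' := rfl
  map_mul' _ _ := rfl

@[simp]
theorem evalMonoidHom_apply (x : X) (g : X →ᵇ ℝ) : evalMonoidHom x g = g x := rfl

theorem evalMonoidHom_injective [T35Space X] :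
    Function.Injective (evalMonoidHom (X := X)) := by
  intro x y hxy
  by_contra hne
  obtain ⟨f, hf, hfx, hfy⟩ :=
    CompletelyRegularSpace.completely_regular x {y} isClosed_singleton hne
  let g : X →ᵇ ℝ := (mkOfCompact ⟨Subtype.val, continuous_subtype_val⟩).compContinuous ⟨f, hf⟩
  have := DFunLike.congr_fun hxy g
  simp [g, hfx, hfy rfl] at this

theorem linearIndependent_evalMonoidHom [T35Space X] :
    LinearIndependent ℝ fun x : X => ⇑(evalMonoidHom x) :=
  (linearIndependent_monoidHom _ ℝ).comp _ evalMonoidHom_injective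

def boundedCharacters (X : Type u) [TopologicalSpace X] : Set ((X →ᵇ ℝ) → ℝ) :=
  range (fun φ : (X →ᵇ ℝ) →* ℝ => ⇑φ) ∩ univ.pi fun g => Icc (-‖g‖) ‖g‖

theorem isCompact_boundedCharacters : IsCompact (boundedCharacters X) :=
  (isCompact_univ_pi fun _ => isCompact_Icc).inter_left (MonoidHom.isClosed_range_coe _ _)

theorem evalMonoidHom_mem_boundedCharacters (x : X) :
    ⇑(evalMonoidHom x) ∈ boundedCharacters X :=
  ⟨⟨_, rfl⟩, fun g _ => abs_le.1 (g.norm_coe_le_norm x)⟩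

def characterCombinations (X : Type u) [TopologicalSpace X] (m r : ℕ) :
    Set ((X →ᵇ ℝ) → ℝ) :=
  (fun p : (Fin m → ℝ) × (Fin m → (X →ᵇ ℝ) → ℝ) => ∑ j, p.1 j • p.2 j) ''
    (univ.pi (fun _ => Icc (-r : ℝ) r) ×ˢ univ.pi fun _ => boundedCharacters X)

theorem isCompact_characterCombinations (m r : ℕ) :
    IsCompact (characterCombinations X m r) :=
  ((isCompact_univ_pi fun _ => isCompact_Icc).prod
    (isCompact_univ_pi fun _ => isCompact_boundedCharacters)).image (by fun_prop)

end BoundedContinuousFunction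

theorem Module.Basis.interior_setOf_card_support_repr_le_eq_empty {𝕜 ι V : Type*}
    [NontriviallyNormedField 𝕜] [AddCommGroup V] [Module 𝕜 V] [TopologicalSpace V]
    [ContinuousAdd V] [ContinuousSMul 𝕜 V] [Infinite ι] (b : Module.Basis ι 𝕜 V) (n : ℕ) :
    interior {v | (b.repr v).support.card ≤ n} = ∅ := by
  classical
  refine eq_empty_of_forall_notMem fun v₀ hv₀ => ?_
  obtain ⟨s, hs⟩ := Infinite.exists_subset_card_eq ι (2 * n + 1)
  let w := b.repr.symm (Finsupp.indicator s fun _ _ => (1 : 𝕜))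
  have hline : Filter.Tendsto (fun t : 𝕜 => v₀ + t • w) (𝓝 0) (𝓝 v₀) := by
    have : Continuous fun t : 𝕜 => v₀ + t • w := by fun_prop
    simpa using this.tendsto 0
  have hsmall : ∀ᶠ t in 𝓝[≠] (0 : 𝕜),
      v₀ + t • w ∈ interior {v | (b.repr v).support.card ≤ n} ∧ t ≠ 0 :=
    ((hline.eventually (isOpen_interior.mem_nhds hv₀)).filter_mono nhdsWithin_le_nhds).and
      self_mem_nhdsWithin
  obtain ⟨t, ht, ht0⟩ := hsmall.exists
  have hsupp : s ⊆ (b.repr (t • w)).support := fun x hx => by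
    rw [map_smul, support_smul_eq ht0]
    simp [w, Finsupp.indicator_of_mem hx]
  have hdiff : b.repr (t • w) = b.repr (v₀ + t • w) - b.repr v₀ := by
    rw [map_add, add_sub_cancel_left]
  have := (Finset.card_le_card (hsupp.trans (hdiff ▸ support_sub))).trans
    (Finset.card_union_le _ _)
  have h₁ : (b.repr (v₀ + t • w)).support.card ≤ n := (interior_subset ht :)
  have h₂ : (b.repr v₀).support.card ≤ n := (interior_subset hv₀ :)
  omega

namespace IsFreeLCS

variable {X : Type u} [TopologicalSpace X] {V : Type v} [AddCommGroup V] [Module ℝ V]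
  [TopologicalSpace V] [IsTopologicalAddGroup V] [ContinuousSMul ℝ V] [LocallyConvexSpace ℝ V]
  {i : X → V}

theorem exists_extend (hV : IsFreeLCS.{u, v, w} V i) {f : X → ℝ} (hf : Continuous f) :
    ∃ φ : V →L[ℝ] ℝ, ∀ x, φ (i x) = f x := by
  obtain ⟨g, hg, -⟩ :=
    hV.2 (ULift.{w} ℝ) (fun x => ULift.up (f x)) (continuous_uliftUp.comp hf)
  exact ⟨(ContinuousLinearEquiv.ulift : ULift.{w} ℝ ≃L[ℝ] ℝ).toContinuousLinearMap.comp g,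
    fun x => congrArg ULift.down (hg x)⟩

theorem span_range_eq_top (hV : IsFreeLCS.{u, v, w} V i) :
    Submodule.span ℝ (range i) = ⊤ := by
  by_contra hspan
  obtain ⟨ρ, hρ, hker⟩ := Submodule.exists_le_ker_of_lt_top _ (lt_top_iff_ne_top.2 hspan)
  obtain ⟨_, -, huniq⟩ := hV.2 IndiscreteReal.{w} (fun _ => 0) continuous_const
  have hρi : ∀ x, ρ (i x) = 0 := fun x =>
    LinearMap.mem_ker.1 (hker (Submodule.subset_span ⟨x, rfl⟩))
  have hρ0 : (IndiscreteReal.ofLinearMap ρ : V →L[ℝ] IndiscreteReal.{w}) = 0 :=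
    (huniq _ fun x => congrArg ULift.up (hρi x)).trans (huniq 0 fun _ => rfl).symm
  exact hρ (LinearMap.ext fun v => congrArg ULift.down (DFunLike.congr_fun hρ0 v))

noncomputable def pairing (hV : IsFreeLCS.{u, v, w} V i) : V →L[ℝ] (X →ᵇ ℝ) → ℝ :=
  .pi fun g => (hV.exists_extend g.continuous).choose

theorem pairing_apply_of (hV : IsFreeLCS.{u, v, w} V i) (x : X) :
    hV.pairing (i x) = evalMonoidHom x :=
  funext fun g => (hV.exists_extend g.continuous).choose_spec x

theorem pairing_linearCombination (hV : IsFreeLCS.{u, v, w} V i) (l : X →₀ ℝ) :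
    hV.pairing (linearCombination ℝ i l) =
      linearCombination ℝ (fun φ : (X →ᵇ ℝ) →* ℝ => ⇑φ) (mapDomain evalMonoidHom l) := by
  rw [← ContinuousLinearMap.coe_coe, apply_linearCombination, linearCombination_mapDomain]
  exact congrArg (fun e => linearCombination ℝ e l) (funext hV.pairing_apply_of)

variable [T35Space X]

theorem linearIndependent (hV : IsFreeLCS.{u, v, w} V i) : LinearIndependent ℝ i :=
  .of_comp hV.pairing.toLinearMap <| by
    convert linearIndependent_evalMonoidHom (X := X) using 1
    exact funext hV.pairing_apply_of

noncomputable def basis (hV : IsFreeLCS.{u, v, w} V i) : Module.Basis X ℝ V :=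
  .mk hV.linearIndependent hV.span_range_eq_top.ge

@[simp]
theorem coe_basis (hV : IsFreeLCS.{u, v, w} V i) : ⇑hV.basis = i :=
  Module.Basis.coe_mk _ _

theorem pairing_eq (hV : IsFreeLCS.{u, v, w} V i) (v : V) :
    hV.pairing v = linearCombination ℝ (fun φ : (X →ᵇ ℝ) →* ℝ => ⇑φ)
      (mapDomain evalMonoidHom (hV.basis.repr v)) := by
  conv_lhs => rw [← hV.basis.linearCombination_repr v, coe_basis]
  exact hV.pairing_linearCombination _

theorem pairing_injective (hV : IsFreeLCS.{u, v, w} V i) : Function.Injective hV.pairing := by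
  intro v v' h
  rw [hV.pairing_eq, hV.pairing_eq] at h
  exact hV.basis.repr.injective
    (mapDomain_injective evalMonoidHom_injective (linearIndependent_monoidHom _ ℝ h))

theorem baireSpace [Finite X] (hV : IsFreeLCS.{u, v, w} V i) : BaireSpace V := by
  have : T2Space V := .of_injective_continuous hV.pairing_injective hV.pairing.continuous
  have : FiniteDimensional ℝ V := .of_basis hV.basis
  exact (Module.finBasis ℝ V).equivFun.toContinuousLinearEquiv.symm.toHomeomorph.baireSpace

theorem card_support_repr_le_of_pairing_eq (hV : IsFreeLCS.{u, v, w} V i) {v : V} {n : ℕ}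
    (c : Fin n → ℝ) (φ : Fin n → (X →ᵇ ℝ) →* ℝ) (h : hV.pairing v = ∑ j, c j • ⇑(φ j)) :
    (hV.basis.repr v).support.card ≤ n := by
  classical
  -- Dedekind's lemma: both sides have the same image under `linearCombination` over characters.
  have hrepr : mapDomain evalMonoidHom (hV.basis.repr v) = ∑ j, single (φ j) (c j) :=
    linearIndependent_monoidHom _ ℝ <| by
      rw [← hV.pairing_eq, h, map_sum]
      simp only [linearCombination_single]
  calc (hV.basis.repr v).support.card
      = (mapDomain evalMonoidHom (hV.basis.repr v)).support.card := by
        rw [mapDomain_support_of_injective evalMonoidHom_injective,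
          Finset.card_image_of_injective _ evalMonoidHom_injective]
    _ ≤ (Finset.univ.image φ).card := by
        rw [hrepr]
        refine Finset.card_le_card
          (support_finsetSum.trans (Finset.biUnion_subset.2 fun j _ => ?_))
        exact support_single_subset.trans
          (Finset.singleton_subset_iff.2 (Finset.mem_image_of_mem _ (Finset.mem_univ j)))
    _ ≤ n := Finset.card_image_le.trans (by simp)

theorem card_support_repr_le_of_pairing_mem (hV : IsFreeLCS.{u, v, w} V i) {v : V} {m r : ℕ}
    (h : hV.pairing v ∈ characterCombinations X m r) : (hV.basis.repr v).support.card ≤ m := by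
  obtain ⟨⟨c, χ⟩, ⟨-, hχ⟩, hv⟩ := h
  choose φ hφ using fun j => (hχ j (mem_univ j)).1
  exact hV.card_support_repr_le_of_pairing_eq c φ (by simpa only [hφ] using hv.symm)

theorem exists_pairing_mem_characterCombinations (hV : IsFreeLCS.{u, v, w} V i) (v : V) :
    ∃ m r : ℕ, hV.pairing v ∈ characterCombinations X m r := by
  let l := hV.basis.repr v
  let e := l.support.equivFin.symm
  let c : Fin l.support.card → ℝ := fun j => l (e j)
  obtain ⟨r, hr⟩ : ∃ r : ℕ, ∀ j, |c j| ≤ r :=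
    ⟨⌈∑ j, |c j|⌉₊, fun j => (Finset.single_le_sum (fun j _ => abs_nonneg (c j))
      (Finset.mem_univ j)).trans (Nat.le_ceil _)⟩
  refine ⟨_, r, (c, fun j => evalMonoidHom (e j : X)),
    ⟨fun j _ => abs_le.1 (hr j), fun j _ => evalMonoidHom_mem_boundedCharacters _⟩, ?_⟩
  rw [hV.pairing_eq, linearCombination_mapDomain, linearCombination_apply, Finsupp.sum,
    ← Finset.sum_coe_sort, ← e.sum_comp]
  rfl

theorem not_baireSpace [Infinite X] (hV : IsFreeLCS.{u, v, w} V i) : ¬ BaireSpace V := by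
  intro _
  let C : ℕ × ℕ → Set V := fun p => hV.pairing ⁻¹' characterCombinations X p.1 p.2
  have hC : ⋃ p, C p = univ := iUnion_eq_univ_iff.2 fun v =>
    let ⟨m, r, h⟩ := hV.exists_pairing_mem_characterCombinations v
    ⟨(m, r), h⟩
  obtain ⟨p, v, hv⟩ := nonempty_interior_of_iUnion_of_closed
    (fun p : ℕ × ℕ => (isCompact_characterCombinations p.1 p.2).isClosed.preimage
      hV.pairing.continuous) hC
  have hsub : C p ⊆ {v | (hV.basis.repr v).support.card ≤ p.1} :=
    fun _ => hV.card_support_repr_le_of_pairing_mem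
  simpa [hV.basis.interior_setOf_card_support_repr_le_eq_empty] using interior_mono hsub hv

end IsFreeLCS

/-- For a Tychonoff space `X` with free locally convex space `(V, i)`:
`V` is a Baire space if and only if `X` is finite. -/
theorem baire_freeLCS_iff_finite
    {X : Type u} [TopologicalSpace X] [T35Space X]
    (V : Type v) [AddCommGroup V] [Module ℝ V] [TopologicalSpace V]
    [IsTopologicalAddGroup V] [ContinuousSMul ℝ V] [LocallyConvexSpace ℝ V] (i : X → V)
    (hV : IsFreeLCS V i) :
    BaireSpace V ↔ Finite X := by
  refine ⟨fun hB => ?_, fun _ => hV.baireSpace⟩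
  by_contra hX
  have := not_finite_iff_infinite.1 hX
  exact hV.not_baireSpace hB
end
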